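/- arXiv:1406.2550 — 8 statements merged into one kernel-verified Lean document; each statement's English description precedes it below -/
import Mathlib

section
/- Let m ≥ 1 and let A ∈ GL_m(ℤ) act on M = ℤ^m. Suppose that for every nonempty finite multiset of complex eigenvalues of the matrix A − Id (i.e., roots of its characteristic polynomial over ℂ, repetitions allowed), the product of the multiset is neither 1 nor −1. Then ⋂_{k∈ℕ} range((1 − A)^k : ℤ^m → ℤ^m) = 0; that is, M is a residually nilpotent ℤ[⟨t⟩]-module for the action of t via A. -/
/-!
Write `B = A - 1`; since `(1 - A)^k = ±B^k`, the intersection in question is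
`L = ⋂ₖ range (B^k)`. As `ℤ^m` is Noetherian, `ker B^N ∩ range B^N = 0` for large `N`, so `B` is
injective on `range B^N ⊇ L`; comparing preimages in `range B^N` shows that `B` maps `L` onto
itself. Hence `B|_L` is an automorphism of the free module `L`, its determinant is `±1`, and
this determinant is the product of the complex roots of the characteristic polynomial of
`B|_L`. By Cayley–Hamilton each of these roots is a root of the characteristic polynomial of
`B`, so if `L ≠ 0` they form a forbidden multiset.
-/

open Polynomial

namespace Module.End

lemma aeval_restrict_apply {R M : Type*} [CommRing R] [AddCommGroup M] [Module R M] (f : End R M)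
    {p : Submodule R M} (hp : ∀ x ∈ p, f x ∈ p) (q : R[X]) (x : p) :
    (aeval (f.restrict hp) q x : M) = aeval f q x := by
  induction q using Polynomial.induction_on' with
  | add r s hr hs => simp [hr, hs]
  | monomial k a =>
    simp only [aeval_monomial, mul_apply, algebraMap_end_apply, Submodule.coe_smul]
    rw [pow_restrict, LinearMap.coe_restrict_apply]

section Noetherian

variable {R M : Type*} [Ring R] [AddCommGroup M] [Module R M] (f : End R M)

lemma range_neg_pow (k : ℕ) : LinearMap.range ((-f) ^ k) = LinearMap.range (f ^ k) := by
  rcases Nat.even_or_odd k with hk | hk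
  · rw [hk.neg_pow]
  · rw [hk.neg_pow, LinearMap.range_neg]

lemma apply_mem_iInf_range_pow :
    ∀ x ∈ ⨅ k : ℕ, LinearMap.range (f ^ k), f x ∈ ⨅ k : ℕ, LinearMap.range (f ^ k) := by
  intro x hx
  refine Submodule.mem_iInf _ |>.mpr fun k ↦ ?_
  obtain ⟨y, rfl⟩ := Submodule.mem_iInf _ |>.mp hx k
  exact ⟨f y, by rw [← mul_apply, ← pow_succ, pow_succ', mul_apply]⟩

variable [IsNoetherian R M]

lemma eventually_injOn_range_pow :
    ∀ᶠ n in Filter.atTop, Set.InjOn f (LinearMap.range (f ^ n)) := by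
  filter_upwards [f.eventually_disjoint_ker_pow_range_pow, Filter.eventually_ge_atTop 1]
    with n hdisj hn
  intro x hx y hy hxy
  have hker : x - y ∈ LinearMap.ker (f ^ n) := by
    obtain ⟨n, rfl⟩ := Nat.exists_eq_add_of_le' hn
    simp [pow_succ, mul_apply, hxy]
  exact sub_eq_zero.mp <| Submodule.disjoint_def.mp hdisj _ hker (Submodule.sub_mem _ hx hy)

lemma bijective_restrict_iInf_range_pow :
    Function.Bijective (f.restrict f.apply_mem_iInf_range_pow) := by
  obtain ⟨N, hinj⟩ := f.eventually_injOn_range_pow.exists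
  have mem_range {x : M} (hx : x ∈ ⨅ k : ℕ, LinearMap.range (f ^ k)) (k : ℕ) :
      x ∈ LinearMap.range (f ^ k) :=
    Submodule.mem_iInf _ |>.mp hx k
  refine ⟨fun x y hxy ↦ Subtype.ext <| hinj (mem_range x.2 N) (mem_range y.2 N) ?_, ?_⟩
  · simpa using congrArg Subtype.val hxy
  rintro ⟨x, hx⟩
  obtain ⟨w, hw⟩ := mem_range hx (N + 1)
  -- `f` is injective on `range (f ^ N)`, so `(f ^ N) w` is the preimage `(f ^ k) u` for all `k ≥ N`
  have hmem : (f ^ N) w ∈ ⨅ k : ℕ, LinearMap.range (f ^ k) := by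
    refine Submodule.mem_iInf _ |>.mpr fun k ↦ ?_
    rcases le_total k N with hk | hk
    · exact f.iterateRange.monotone hk ⟨w, rfl⟩
    obtain ⟨u, hu⟩ := mem_range hx (k + 1)
    have : (f ^ N) w = (f ^ k) u := by
      refine hinj ⟨w, rfl⟩ (f.iterateRange.monotone hk ⟨u, rfl⟩) ?_
      rw [← mul_apply, ← pow_succ', hw, ← mul_apply, ← pow_succ', hu]
    exact ⟨u, this.symm⟩
  exact ⟨⟨_, hmem⟩, Subtype.ext <| by simp [← mul_apply, ← pow_succ', hw]⟩

end Noetherian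

end Module.End

namespace Matrix

variable {ι R K : Type*} [Fintype ι] [DecidableEq ι] [CommRing R] [Field K] [Algebra R K]

lemma aeval_eq_zero_of_mem_roots_charpoly_map (C : Matrix ι ι R) {p : R[X]} (hp : aeval C p = 0)
    {z : K} (hz : z ∈ (C.map (algebraMap R K)).charpoly.roots) : aeval z p = 0 := by
  have hspec : z ∈ spectrum K (C.map (algebraMap R K)) :=
    mem_spectrum_iff_isRoot_charpoly.mpr (isRoot_of_mem_roots hz)
  have hmap : aeval (C.map (algebraMap R K)) (p.map (algebraMap R K)) = 0 := by
    rw [aeval_map_algebraMap, show C.map (algebraMap R K) = (Algebra.ofId R K).mapMatrix C from rfl,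
      aeval_algHom_apply, hp, map_zero]
  have := spectrum.subset_polynomial_aeval _ (p.map (algebraMap R K)) ⟨z, hspec, rfl⟩
  rw [hmap, spectrum.mem_iff, sub_zero] at this
  rw [← eval_map_algebraMap]
  by_contra hne
  exact this ((Ne.isUnit hne).map _)

variable [IsAlgClosed K]

lemma card_roots_charpoly_map (C : Matrix ι ι R) :
    Multiset.card (C.map (algebraMap R K)).charpoly.roots = Fintype.card ι := by
  rw [IsAlgClosed.card_roots_eq_natDegree, charpoly_natDegree_eq_dim]

lemma prod_roots_charpoly_map (C : Matrix ι ι R) :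
    (C.map (algebraMap R K)).charpoly.roots.prod = algebraMap R K C.det := by
  rw [← det_eq_prod_roots_charpoly, RingHom.map_det]
  rfl

end Matrix

lemma Module.End.exists_multiset_aeval_eq_zero_prod_eq_det {R N K : Type*} [CommRing R]
    [AddCommGroup N] [Module R N] [Module.Free R N] [Module.Finite R N] [Nontrivial N]
    [Field K] [IsAlgClosed K] [Algebra R K] (f : Module.End R N) {p : R[X]} (hp : aeval f p = 0) :
    ∃ s : Multiset K, s ≠ 0 ∧ (∀ z ∈ s, aeval z p = 0) ∧
      s.prod = algebraMap R K (LinearMap.det f) := by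
  let b := Module.Free.chooseBasis R N
  let C := LinearMap.toMatrix b b f
  have hC : aeval C p = 0 := by
    change aeval (LinearMap.toMatrixAlgEquiv b f) p = 0
    rw [aeval_algHom_apply, hp, map_zero]
  refine ⟨(C.map (algebraMap R K)).charpoly.roots, ?_,
    fun z hz ↦ C.aeval_eq_zero_of_mem_roots_charpoly_map hC hz, ?_⟩
  · rw [← Multiset.card_pos, C.card_roots_charpoly_map]
    exact Fintype.card_pos
  · rw [C.prod_roots_charpoly_map, LinearMap.det_toMatrix]

theorem residually_nilpotent_of_eigenvalue_products_general (m : ℕ)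
    (A : Matrix (Fin m) (Fin m) ℤ)
    (heig : ∀ s : Multiset ℂ, s ≠ 0 →
      (∀ z ∈ s, (Polynomial.aeval z) (A - 1).charpoly = 0) →
      s.prod ≠ 1 ∧ s.prod ≠ -1) :
    (⨅ k : ℕ, LinearMap.range ((Matrix.toLin' (1 - A)) ^ k)) = ⊥ := by
  set f : Module.End ℤ (Fin m → ℤ) := Matrix.toLin' (A - 1)
  have hneg : Matrix.toLin' (1 - A) = -f := by rw [← map_neg, neg_sub]
  simp_rw [hneg, Module.End.range_neg_pow]
  by_contra hL
  have := Submodule.nontrivial_iff_ne_bot.mpr hL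
  set g : Module.End ℤ ↥(⨅ k : ℕ, LinearMap.range (f ^ k)) :=
    f.restrict f.apply_mem_iInf_range_pow
  have hg : aeval g (A - 1).charpoly = 0 := LinearMap.ext fun x ↦ Subtype.ext <| by
    rw [Module.End.aeval_restrict_apply, ← Matrix.charpoly_toLin', LinearMap.aeval_self_charpoly]
    rfl
  obtain ⟨s, hs, hroots, hprod⟩ := g.exists_multiset_aeval_eq_zero_prod_eq_det (K := ℂ) hg
  have hdet : IsUnit (LinearMap.det g) :=
    LinearMap.isUnit_det _ <| (Module.End.isUnit_iff g).mpr f.bijective_restrict_iInf_range_pow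
  obtain ⟨hne_one, hne_neg_one⟩ := heig s hs hroots
  rcases Int.isUnit_iff.mp hdet with h | h
  · exact hne_one (by simpa [h] using hprod)
  · exact hne_neg_one (by simpa [h] using hprod)

/-- Let `A ∈ GL_m(ℤ)` act on `M = ℤ^m`. If the product of every nonempty finite
multiset of complex eigenvalues of `A - Id` (roots of its characteristic polynomial
over `ℂ`, repetitions allowed) is neither `1` nor `-1`, then
`⋂_k range((1 - A)^k) = 0`, i.e. `M` is a residually nilpotent
`ℤ[⟨t⟩]`-module for `t` acting via `A`. -/
theorem residually_nilpotent_of_eigenvalue_products (m : ℕ) (hm : 1 ≤ m)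
    (A : Matrix (Fin m) (Fin m) ℤ) (hA : IsUnit A.det)
    (heig : ∀ s : Multiset ℂ, s ≠ 0 →
      (∀ z ∈ s, (Polynomial.aeval z) (A - 1).charpoly = 0) →
      s.prod ≠ 1 ∧ s.prod ≠ -1) :
    (⨅ k : ℕ, LinearMap.range ((Matrix.toLin' (1 - A)) ^ k)) = ⊥ :=
  residually_nilpotent_of_eigenvalue_products_general m A heig
end

section
/- In the one-relator group G = ⟨a, b | a^{b²} = a·a^{3b}⟩, the identity a³ = ([a, b²])^{b⁻¹} holds, and consequently a^{3^k} ∈ γ_{k+1}(G) for every k ≥ 1 (so a is a generalized 3-torsion element of G). -/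
/-!
Reading the relation as `b⁻¹a³b = a⁻¹a^{b²}` gives `a³ = ([a,b²])^{b⁻¹} ∈ γ₂`. Commutation is
additive modulo one more step of the lower central series: for `x ∈ γₙ`,
`[x^p, y] ≡ [x,y]^p (mod γₙ₊₂)`. As `G` is generated by `a` and `b`, the layer `γ₂/γ₃` is
generated by the images of `[a,b]^{±1}`, whose cubes are `≡ [a³,b]^{±1} ∈ γ₃`. If `γₙ/γₙ₊₁`
has exponent `3` then so has `γₙ₊₁/γₙ₊₂`, being generated by the `[x,y]` with `x ∈ γₙ`, for
which `[x,y]³ ≡ [x³,y] ∈ γₙ₊₂`. Hence cubing maps `γₙ` into `γₙ₊₁` for `n ≥ 2`, and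
`a^{3^k} ∈ γₖ₊₁`.

Mathlib's `lowerCentralSeries ⊤ n` is `γₙ₊₁`.
-/

namespace OneRelatorLCS

/-- The relator `(b⁻²ab²)⁻¹ · a · (b⁻¹a³b)` in the free group on `a = of 0`, `b = of 1`,
expressing the relation `a^{b²} = a·a^{3b}` (with `x^y = y⁻¹xy`). -/
def rel : FreeGroup (Fin 2) :=
  ((FreeGroup.of 1)⁻¹ * (FreeGroup.of 1)⁻¹ * FreeGroup.of 0 * FreeGroup.of 1 * FreeGroup.of 1)⁻¹ *
    FreeGroup.of 0 *
    ((FreeGroup.of 1)⁻¹ * (FreeGroup.of 0) ^ 3 * FreeGroup.of 1)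

/-- The one-relator group `G = ⟨a, b | a^{b²} = a·a^{3b}⟩`. -/
abbrev G : Type := PresentedGroup ({rel} : Set (FreeGroup (Fin 2)))

def a : G := PresentedGroup.of 0
def b : G := PresentedGroup.of 1

/-- `[x,y] = x⁻¹y⁻¹xy`. -/
def cmt {H : Type*} [Group H] (x y : H) : H := x⁻¹ * y⁻¹ * x * y

end OneRelatorLCS

open scoped commutatorElement

namespace Subgroup

variable {H : Type*} [Group H]

open QuotientGroup

theorem pow_mem_of_mem_closure_of_commutatorElement_mem {N : Subgroup H} [N.Normal]
    {S : Set H} {p : ℕ} (hcentral : ∀ s ∈ S, ∀ h : H, ⁅s, h⁆ ∈ N) (hpow : ∀ s ∈ S, s ^ p ∈ N)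
    {g : H} (hg : g ∈ closure S) : g ^ p ∈ N := by
  have hcenter : closure S ≤ (center (H ⧸ N)).comap (mk' N) := by
    refine closure_le _ |>.mpr fun s hs => mem_center_iff.mpr fun q => ?_
    induction q using QuotientGroup.induction_on with
    | H h =>
      have hsh : mk' N ⁅s, h⁆ = 1 := (eq_one_iff _).mpr (hcentral s hs h)
      rw [map_commutatorElement, commutatorElement_eq_one_iff_commute] at hsh
      exact hsh.eq.symm
  rw [← eq_one_iff, ← mk'_apply, map_pow]
  induction hg using closure_induction with
  | mem s hs => rw [← map_pow, mk'_apply, eq_one_iff]; exact hpow s hs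
  | one => rw [map_one, one_pow]
  | mul x y hx _ hxp hyp =>
    have hxy : Commute (mk' N x) (mk' N y) := (mem_center_iff.mp (hcenter hx) _).symm
    rw [map_mul, hxy.mul_pow, hxp, hyp, one_mul]
  | inv x _ hxp => rw [map_inv, inv_pow, hxp, inv_one]

theorem commute_mk'_of_mem_lowerCentralSeries {n : ℕ} {x : H}
    (hx : x ∈ lowerCentralSeries ⊤ n) (y : H) :
    Commute (mk' (lowerCentralSeries ⊤ (n + 1)) x) (mk' _ y) := by
  rw [← commutatorElement_eq_one_iff_commute, ← map_commutatorElement, mk'_apply, eq_one_iff]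
  exact commutator_mem_commutator hx (mem_top y)

theorem mk'_commutatorElement_mul_left {n : ℕ} (x : H) {z : H}
    (hz : z ∈ lowerCentralSeries ⊤ n) (y : H) :
    mk' (lowerCentralSeries ⊤ (n + 2)) ⁅x * z, y⁆ = mk' _ ⁅x, y⁆ * mk' _ ⁅z, y⁆ := by
  have hzy : ⁅z, y⁆ ∈ lowerCentralSeries ⊤ (n + 1) :=
    commutator_mem_commutator hz (mem_top y)
  have hconj := commute_mk'_of_mem_lowerCentralSeries hzy x
  rw [commutatorElement_mul_left_eq_conj_mul, map_mul, map_mul, map_mul, map_inv, ← hconj.eq,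
    mul_inv_cancel_right, commute_mk'_of_mem_lowerCentralSeries hzy ⁅x, y⁆ |>.eq]

theorem mk'_commutatorElement_pow_left {n : ℕ} {x : H} (hx : x ∈ lowerCentralSeries ⊤ n)
    (y : H) (p : ℕ) :
    mk' (lowerCentralSeries ⊤ (n + 2)) ⁅x ^ p, y⁆ = mk' _ ⁅x, y⁆ ^ p := by
  induction p with
  | zero => rw [pow_zero, pow_zero, commutatorElement_one_left, map_one]
  | succ p ih => rw [pow_succ, mk'_commutatorElement_mul_left _ hx, ih, pow_succ]

theorem commutatorElement_pow_mem_lowerCentralSeries {n p : ℕ} {x : H}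
    (hx : x ∈ lowerCentralSeries ⊤ n) (hxp : x ^ p ∈ lowerCentralSeries ⊤ (n + 1)) (y : H) :
    ⁅x, y⁆ ^ p ∈ lowerCentralSeries ⊤ (n + 2) := by
  rw [← eq_one_iff, ← mk'_apply, map_pow, ← mk'_commutatorElement_pow_left hx, mk'_apply,
    eq_one_iff]
  exact commutator_mem_commutator hxp (mem_top y)

theorem pow_mem_lowerCentralSeries_of_commutatorElement_pow_mem {n p : ℕ}
    (h : ∀ x ∈ lowerCentralSeries (⊤ : Subgroup H) n, ∀ y : H,
      ⁅x, y⁆ ^ p ∈ lowerCentralSeries ⊤ (n + 2))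
    {g : H} (hg : g ∈ lowerCentralSeries ⊤ (n + 1)) : g ^ p ∈ lowerCentralSeries ⊤ (n + 2) := by
  refine pow_mem_of_mem_closure_of_commutatorElement_mem ?_ ?_
    ((mem_lowerCentralSeries_succ_iff _ n g).mp hg)
  · rintro _ ⟨x, hx, y, -, rfl⟩ z
    exact commutator_mem_commutator (commutator_mem_commutator hx (mem_top y)) (mem_top z)
  · rintro _ ⟨x, hx, y, -, rfl⟩
    exact h x hx y

theorem commutatorElement_pow_mem_lowerCentralSeries_two_of_closure {S : Set H}
    (hS : closure S = ⊤) {p : ℕ} {y : H} (h : ∀ s ∈ S, ⁅s, y⁆ ^ p ∈ lowerCentralSeries ⊤ 2)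
    (x : H) : ⁅x, y⁆ ^ p ∈ lowerCentralSeries ⊤ 2 := by
  have hx : x ∈ closure S := hS ▸ mem_top x
  have hmem (z : H) := commutator_mem_commutator (mem_top z) (mem_top y)
  rw [← eq_one_iff, ← mk'_apply, map_pow]
  induction hx using closure_induction with
  | mem s hs => rw [← map_pow, mk'_apply, eq_one_iff]; exact h s hs
  | one => rw [commutatorElement_one_left, map_one, one_pow]
  | mul x z _ _ hxp hzp =>
    have hxz := commute_mk'_of_mem_lowerCentralSeries (n := 1) (hmem x) ⁅z, y⁆
    rw [mk'_commutatorElement_mul_left (n := 0) x (mem_top z), hxz.mul_pow, hxp, hzp,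
      one_mul]
  | inv x _ hxp =>
    have hinv : mk' (lowerCentralSeries ⊤ 2) ⁅x⁻¹, y⁆ = (mk' _ ⁅x, y⁆)⁻¹ := by
      refine eq_inv_of_mul_eq_one_left ?_
      rw [← mk'_commutatorElement_mul_left (n := 0) _ (mem_top x), inv_mul_cancel,
        commutatorElement_one_left, map_one]
    rw [hinv, inv_pow, hxp, inv_one]

theorem pow_mem_lowerCentralSeries_two_of_closure_pair {x y : H} (hxy : closure {x, y} = ⊤)
    {p : ℕ} (hx : x ^ p ∈ lowerCentralSeries ⊤ 1) {g : H}
    (hg : g ∈ lowerCentralSeries ⊤ 1) : g ^ p ∈ lowerCentralSeries ⊤ 2 := by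
  have hleft (w : H) : ⁅x, w⁆ ^ p ∈ lowerCentralSeries ⊤ 2 :=
    commutatorElement_pow_mem_lowerCentralSeries (n := 0) (mem_top x) hx w
  have hright (z : H) : ⁅z, y⁆ ^ p ∈ lowerCentralSeries ⊤ 2 := by
    refine commutatorElement_pow_mem_lowerCentralSeries_two_of_closure hxy ?_ z
    rintro _ (rfl | rfl)
    · exact hleft y
    · rw [commutatorElement_self, one_pow]; exact one_mem _
  refine pow_mem_lowerCentralSeries_of_commutatorElement_pow_mem (n := 0) (fun z _ w => ?_) hg
  refine commutatorElement_pow_mem_lowerCentralSeries_two_of_closure hxy ?_ z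
  rintro _ (rfl | rfl)
  · exact hleft w
  · rw [← commutatorElement_inv, inv_pow]; exact inv_mem (hright w)

theorem pow_mem_lowerCentralSeries_succ_of_closure_pair {x y : H} (hxy : closure {x, y} = ⊤)
    {p : ℕ} (hx : x ^ p ∈ lowerCentralSeries ⊤ 1) {n : ℕ} (hn : 1 ≤ n) {g : H}
    (hg : g ∈ lowerCentralSeries ⊤ n) : g ^ p ∈ lowerCentralSeries ⊤ (n + 1) := by
  induction n, hn using Nat.le_induction generalizing g with
  | base => exact pow_mem_lowerCentralSeries_two_of_closure_pair hxy hx hg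
  | succ n _ ih =>
    exact pow_mem_lowerCentralSeries_of_commutatorElement_pow_mem
      (fun z hz w => commutatorElement_pow_mem_lowerCentralSeries hz (ih hz) w) hg

theorem pow_pow_mem_lowerCentralSeries_of_closure_pair {x y : H} (hxy : closure {x, y} = ⊤)
    {p : ℕ} (hx : x ^ p ∈ lowerCentralSeries ⊤ 1) {k : ℕ} (hk : 1 ≤ k) :
    x ^ p ^ k ∈ lowerCentralSeries ⊤ k := by
  induction k, hk using Nat.le_induction with
  | base => rwa [pow_one]
  | succ k hk ih =>
    rw [pow_succ, pow_mul]
    exact pow_mem_lowerCentralSeries_succ_of_closure_pair hxy hx hk ih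

end Subgroup

namespace OneRelatorLCS

open Subgroup

theorem cmt_eq_commutatorElement {H : Type*} [Group H] (x y : H) : cmt x y = ⁅x⁻¹, y⁻¹⁆ := by
  rw [cmt, commutatorElement_def, inv_inv, inv_inv]

theorem closure_a_b : closure {a, b} = ⊤ := by
  rw [← PresentedGroup.closure_range_of]
  congr
  ext
  simp [Fin.exists_fin_two, a, b, eq_comm]

theorem a_pow_three_eq : a ^ 3 = b * cmt a (b * b) * b⁻¹ := by
  -- the image of `rel` in `G`, which is definitionally this word in `a` and `b`
  have hrel : (b⁻¹ * b⁻¹ * a * b * b)⁻¹ * a * (b⁻¹ * a ^ 3 * b) = 1 :=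
    PresentedGroup.one_of_mem (Set.mem_singleton rel)
  calc a ^ 3 = b * (a⁻¹ * (b⁻¹ * b⁻¹ * a * b * b) *
        ((b⁻¹ * b⁻¹ * a * b * b)⁻¹ * a * (b⁻¹ * a ^ 3 * b))) * b⁻¹ := by group
    _ = b * cmt a (b * b) * b⁻¹ := by rw [hrel, mul_one, cmt]; group

theorem a_pow_three_mem : a ^ 3 ∈ (⊤ : Subgroup G).lowerCentralSeries 1 := by
  rw [a_pow_three_eq, cmt_eq_commutatorElement]
  exact (lowerCentralSeries_normal ⊤ 1).conj_mem _
    (commutator_mem_commutator (mem_top _) (mem_top _)) b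

/-- In `G = ⟨a, b | a^{b²} = a·a^{3b}⟩` one has `a³ = ([a,b²])^{b⁻¹}`, and
consequently `a^{3^k} ∈ γ_{k+1}(G)` for every `k ≥ 1` (so `a` is a generalized
3-torsion element).  Here `γ_{k+1}(G) = lowerCentralSeries G k` since
`γ_1(G) = G = lowerCentralSeries G 0`. -/
theorem a_is_generalized_three_torsion :
    a ^ 3 = (b⁻¹)⁻¹ * cmt a (b * b) * b⁻¹ ∧
      ∀ k : ℕ, 1 ≤ k → a ^ (3 ^ k) ∈ (⊤ : Subgroup G).lowerCentralSeries k :=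
  ⟨by rw [inv_inv, a_pow_three_eq],
    fun _ hk => pow_pow_mem_lowerCentralSeries_of_closure_pair closure_a_b a_pow_three_mem hk⟩

end OneRelatorLCS
end

section
/- In the one-relator group G = ⟨a, b | a^{b²} = a·a^{3b}⟩, the identity [a^b, a]² = [[a, a^b], a^{3b}·b⁻¹] holds, and consequently for every n ≥ 1 there exists k with [a, a^b]^{2^k} ∈ γ_n(G) (so [a, a^b] is a generalized 2-torsion element of G). -/
namespace OneRelatorLCS

/-! Put `c = [a, a^b]` and `w = b⁻¹a³ = a^{3b}b⁻¹`. Since `a^{3b}` commutes with `a^b`, the relation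
gives `c^{a^{3b}} = [a·a^{3b}, a^b] = [a^{b²}, a^b] = (c⁻¹)^b`, i.e. conjugation by `w` inverts `c`.
Then `[c, w] = c⁻² = [a^b, a]²`, and for every `x` inverted by `w` the square `x²` is
the commutator of `x` with `w`; as `w` also inverts `c^{2^k}`, induction puts `c^{2^k}` in
`γ_{k+1}(G)`. -/

section InvertedByConjugation

open scoped commutatorElement

variable {H : Type*} [Group H] {x w : H}

theorem cmt_inv (x y : H) : (cmt x y)⁻¹ = cmt y x := by
  simp only [cmt]
  group

theorem cmt_eq_inv_sq_of_conj_eq_inv (hw : w⁻¹ * x * w = x⁻¹) : cmt x w = x⁻¹ ^ 2 := by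
  rw [cmt, mul_assoc x⁻¹, mul_assoc x⁻¹, hw, sq]

theorem sq_mem_lowerCentralSeries_succ_of_conj_eq_inv {k : ℕ}
    (hx : x ∈ (⊤ : Subgroup H).lowerCentralSeries k) (hw : w⁻¹ * x * w = x⁻¹) :
    x ^ 2 ∈ (⊤ : Subgroup H).lowerCentralSeries (k + 1) := by
  have hsq : x ^ 2 = ⁅x, w⁆ := by
    rw [sq, commutatorElement_def, ← hw]
    group
  rw [hsq, Subgroup.lowerCentralSeries_succ]
  exact Subgroup.commutator_mem_commutator hx (Subgroup.mem_top w)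

theorem pow_two_pow_mem_lowerCentralSeries_of_conj_eq_inv (hw : w⁻¹ * x * w = x⁻¹) (k : ℕ) :
    x ^ 2 ^ k ∈ (⊤ : Subgroup H).lowerCentralSeries k := by
  induction k with
  | zero => simp
  | succ k ih =>
    have hwk : w⁻¹ * x ^ 2 ^ k * w = (x ^ 2 ^ k)⁻¹ := by
      simpa [hw, inv_pow] using (conj_pow (a := w⁻¹) (b := x) (i := 2 ^ k)).symm
    rw [pow_succ, pow_mul]
    exact sq_mem_lowerCentralSeries_succ_of_conj_eq_inv ih hwk

end InvertedByConjugation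

theorem conj_b_sq_a_eq : b⁻¹ * b⁻¹ * a * b * b = a * (b⁻¹ * a ^ 3 * b) := by
  have h : (b⁻¹ * b⁻¹ * a * b * b)⁻¹ * a * (b⁻¹ * a ^ 3 * b) = 1 :=
    PresentedGroup.one_of_mem (Set.mem_singleton rel)
  rwa [mul_assoc, inv_mul_eq_one] at h

theorem conj_cmt_a_conj_b_eq_inv :
    (b⁻¹ * a ^ 3)⁻¹ * cmt a (b⁻¹ * a * b) * (b⁻¹ * a ^ 3) = (cmt a (b⁻¹ * a * b))⁻¹ :=
  calc (b⁻¹ * a ^ 3)⁻¹ * cmt a (b⁻¹ * a * b) * (b⁻¹ * a ^ 3)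
      = b * cmt (a * (b⁻¹ * a ^ 3 * b)) (b⁻¹ * a * b) * b⁻¹ := by simp only [cmt]; group
    _ = b * cmt (b⁻¹ * b⁻¹ * a * b * b) (b⁻¹ * a * b) * b⁻¹ := by rw [conj_b_sq_a_eq]
    _ = (cmt a (b⁻¹ * a * b))⁻¹ := by simp only [cmt]; group

/-- In `G = ⟨a, b | a^{b²} = a·a^{3b}⟩` one has
`[a^b, a]² = [[a, a^b], a^{3b}·b⁻¹]`, and consequently for every `n ≥ 1` there is
`k` with `[a, a^b]^{2^k} ∈ γ_n(G)` (so `[a, a^b]` is a generalized 2-torsion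
element).  Here `γ_n(G) = lowerCentralSeries G (n-1)` since `γ_1(G) = G`. -/
theorem comm_is_generalized_two_torsion :
    (cmt (b⁻¹ * a * b) a) ^ 2 = cmt (cmt a (b⁻¹ * a * b)) (b⁻¹ * a ^ 3 * b * b⁻¹) ∧
      ∀ n : ℕ, 1 ≤ n → ∃ k : ℕ, (cmt a (b⁻¹ * a * b)) ^ (2 ^ k) ∈
        (⊤ : Subgroup G).lowerCentralSeries (n - 1) := by
  refine ⟨?_, fun n _ => ⟨n - 1, ?_⟩⟩
  · rw [mul_inv_cancel_right, cmt_eq_inv_sq_of_conj_eq_inv conj_cmt_a_conj_b_eq_inv, cmt_inv]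
  · exact pow_two_pow_mem_lowerCentralSeries_of_conj_eq_inv conj_cmt_a_conj_b_eq_inv (n - 1)

end OneRelatorLCS
end

section
/- In the one-relator group G = ⟨a, b | a^{b²} = a·a^{3b}⟩, the element [a, a^b] is a nontrivial element of ⋂_{n∈ℕ} γ_n(G). In particular G is not residually nilpotent. -/
/-!
Write `a₁ = a^b`, so that conjugation by `b` acts as `a ↦ a₁ ↦ a a₁³`, and let `c = [a, a₁]`.
In every nilpotent group in which the relation holds, `c = 1`, for two coprime reasons.

Conjugation by `b a₁⁻³` inverts `c`, so `c^(2^k) ∈ γ_(k+1)` and `c` has `2`-power order.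

Modulo the derived subgroup `N'` of `N = ⟨⟨a⟩⟩`, conjugation by `b` acts on the abelian group
generated by `a` and `a₁` through the matrix `T = (0 1; 1 3)`, and `⁅x⁻¹, b⁻¹⁆ = x⁻¹ x^b` acts as
`T - 1`, of determinant `-3`. Hence `a^(±3^m) ∈ γ_(m+1)`, so `N/N'` has `3`-power exponent, and then
so does the nilpotent group `N`, which contains `c`.

Since `G/γ_n` is nilpotent, `c ∈ ⋂ γ_n`; and `a ↦ (0 1 2)`, `b ↦ (2 3)` defines a map to `S₄`
sending `c` to a nontrivial element.
-/

universe u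

open Subgroup
open scoped commutatorElement

section LowerCentralSeries

variable {H : Type*} [Group H]

theorem Commute.zpow_mul_zpow_mul_zpow_mul_zpow {u v : H} (huv : Commute u v) (i j k l : ℤ) :
    u ^ i * v ^ j * (u ^ k * v ^ l) = u ^ (i + k) * v ^ (j + l) := by
  rw [zpow_add, zpow_add, mul_assoc, ← mul_assoc (v ^ j), (huv.zpow_zpow k j).symm.eq]
  group

theorem Subgroup.map_top_lowerCentralSeries_of_surjective {K : Type*} [Group K] {f : H →* K}
    (hf : Function.Surjective f) (n : ℕ) :
    ((⊤ : Subgroup H).lowerCentralSeries n).map f = (⊤ : Subgroup K).lowerCentralSeries n := by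
  rw [map_lowerCentralSeries, map_top_of_surjective f hf]

theorem mem_center_of_mem_lowerCentralSeries {n : ℕ}
    (hbot : (⊤ : Subgroup H).lowerCentralSeries (n + 1) = ⊥) {z : H}
    (hz : z ∈ (⊤ : Subgroup H).lowerCentralSeries n) : z ∈ center H := by
  refine mem_center_iff.mpr fun g => (commutatorElement_eq_one_iff_mul_comm.mp ?_).symm
  rw [← mem_bot, ← hbot]
  exact commutator_mem_commutator hz (mem_top g)

section Exponent

variable {e : ℕ}

theorem commutatorElement_pow_eq_one_of_lowerCentralSeries_eq_bot {n : ℕ}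
    (hbot : (⊤ : Subgroup H).lowerCentralSeries (n + 2) = ⊥)
    (he : ∀ x : H, x ^ e ∈ commutator H) {p : H}
    (hp : p ∈ (⊤ : Subgroup H).lowerCentralSeries n) (q : H) : ⁅p, q⁆ ^ e = 1 := by
  have hcentral (g : H) : ⁅p, g⁆ ∈ center H :=
    mem_center_of_mem_lowerCentralSeries hbot (commutator_mem_commutator hp (mem_top g))
  let φ : H →* H := MonoidHom.mk' (fun g => ⁅p, g⁆) fun g h =>
    calc ⁅p, g * h⁆ = ⁅p, g⁆ * (g * ⁅p, h⁆ * g⁻¹) := by simp only [commutatorElement_def]; group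
      _ = ⁅p, g⁆ * ⁅p, h⁆ := by rw [mem_center_iff.mp (hcentral h) g, mul_inv_cancel_right]
  have hker : commutator H ≤ φ.ker := by
    rw [commutator_def, commutator_le]
    intro g₁ _ g₂ _
    rw [MonoidHom.mem_ker, map_commutatorElement, commutatorElement_eq_one_iff_mul_comm]
    exact mem_center_iff.mp (hcentral g₂) (φ g₁)
  have hφ : φ (q ^ e) = 1 := hker (he q)
  rwa [map_pow] at hφ

theorem pow_eq_one_of_mem_lowerCentralSeries {n : ℕ}
    (hbot : (⊤ : Subgroup H).lowerCentralSeries (n + 1) = ⊥)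
    (he : ∀ x : H, x ^ e ∈ commutator H) {z : H}
    (hz : z ∈ (⊤ : Subgroup H).lowerCentralSeries n) : z ^ e = 1 := by
  cases n with
  | zero => rw [← mem_bot, ← hbot]; exact he z
  | succ m =>
    induction hz using closure_induction with
    | mem _ hg =>
      obtain ⟨p, hp, q, -, rfl⟩ := hg
      exact commutatorElement_pow_eq_one_of_lowerCentralSeries_eq_bot hbot he hp q
    | one => exact one_pow e
    | mul x y hx _ hxe hye =>
      have hxy : Commute x y :=
        (mem_center_iff.mp (mem_center_of_mem_lowerCentralSeries hbot hx) y).symm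
      rw [hxy.mul_pow, hxe, hye, one_mul]
    | inv x _ hxe => rw [inv_pow, hxe, inv_one]

theorem pow_mem_lowerCentralSeries_succ (he : ∀ x : H, x ^ e ∈ commutator H) {n : ℕ} {z : H}
    (hz : z ∈ (⊤ : Subgroup H).lowerCentralSeries n) :
    z ^ e ∈ (⊤ : Subgroup H).lowerCentralSeries (n + 1) := by
  set L := (⊤ : Subgroup H).lowerCentralSeries (n + 1)
  set π := QuotientGroup.mk' L
  have hπ : Function.Surjective π := QuotientGroup.mk'_surjective L
  have hbot : (⊤ : Subgroup (H ⧸ L)).lowerCentralSeries (n + 1) = ⊥ := by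
    rw [← map_top_lowerCentralSeries_of_surjective hπ, Subgroup.map_eq_bot_iff,
      QuotientGroup.ker_mk']
  have he' (y : H ⧸ L) : y ^ e ∈ commutator (H ⧸ L) := by
    obtain ⟨x, rfl⟩ := hπ y
    rw [← top_lowerCentralSeries_one, ← map_top_lowerCentralSeries_of_surjective hπ, ← map_pow]
    exact mem_map_of_mem π (he x)
  have hπz : π z ∈ (⊤ : Subgroup _).lowerCentralSeries n := by
    rw [← map_top_lowerCentralSeries_of_surjective hπ]
    exact mem_map_of_mem π hz
  rw [← QuotientGroup.ker_mk' L, MonoidHom.mem_ker, map_pow]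
  exact pow_eq_one_of_mem_lowerCentralSeries hbot he' hπz

theorem pow_pow_mem_lowerCentralSeries (he : ∀ x : H, x ^ e ∈ commutator H) (x : H) (n : ℕ) :
    x ^ e ^ n ∈ (⊤ : Subgroup H).lowerCentralSeries n := by
  induction n with
  | zero => exact mem_top _
  | succ n ih => rw [pow_succ, pow_mul]; exact pow_mem_lowerCentralSeries_succ he ih

theorem exists_pow_pow_eq_one_of_pow_mem_commutator [Group.IsNilpotent H]
    (he : ∀ x : H, x ^ e ∈ commutator H) : ∃ n, ∀ x : H, x ^ e ^ n = 1 := by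
  obtain ⟨n, hn⟩ := Subgroup.nilpotent_iff_lowerCentralSeries.mp ‹Group.IsNilpotent H›
  exact ⟨n, fun x => by simpa [hn] using pow_pow_mem_lowerCentralSeries he x n⟩

theorem Subgroup.exists_pow_pow_eq_one_of_pow_mem_commutator (N : Subgroup H) [Group.IsNilpotent N]
    (he : ∀ x ∈ N, x ^ e ∈ ⁅N, N⁆) : ∃ n, ∀ x ∈ N, x ^ e ^ n = 1 := by
  have he' (y : N) : y ^ e ∈ _root_.commutator N := by
    rw [← mem_map_iff_mem N.subtype_injective, map_subtype_commutator, map_pow]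
    exact he y y.2
  obtain ⟨n, hn⟩ := _root_.exists_pow_pow_eq_one_of_pow_mem_commutator he'
  exact ⟨n, fun x hx => by simpa using congrArg N.subtype (hn ⟨x, hx⟩)⟩

end Exponent

theorem pow_two_pow_mem_lowerCentralSeries {c g : H} (h : g⁻¹ * c * g = c⁻¹) (k : ℕ) :
    c ^ 2 ^ k ∈ (⊤ : Subgroup H).lowerCentralSeries k := by
  induction k with
  | zero => exact mem_top _
  | succ k ih =>
    have hk : g⁻¹ * c ^ 2 ^ k * g = (c ^ 2 ^ k)⁻¹ := by
      simpa [h] using (conj_pow (a := g⁻¹) (b := c) (i := 2 ^ k)).symm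
    have hcomm : ⁅(c ^ 2 ^ k)⁻¹, g⁻¹⁆ = (c ^ 2 ^ (k + 1))⁻¹ := by
      calc ⁅(c ^ 2 ^ k)⁻¹, g⁻¹⁆ = (c ^ 2 ^ k)⁻¹ * (g⁻¹ * c ^ 2 ^ k * g) := by
            rw [commutatorElement_def]; group
        _ = (c ^ 2 ^ (k + 1))⁻¹ := by rw [hk, pow_succ, pow_mul]; group
    rw [← inv_inv (c ^ 2 ^ (k + 1)), ← hcomm]
    exact inv_mem (commutator_mem_commutator (inv_mem ih) (mem_top _))

theorem exists_pow_two_pow_eq_one_of_conj_eq_inv [Group.IsNilpotent H] {c g : H}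
    (h : g⁻¹ * c * g = c⁻¹) : ∃ k, c ^ 2 ^ k = 1 := by
  obtain ⟨k, hk⟩ := Subgroup.nilpotent_iff_lowerCentralSeries.mp ‹Group.IsNilpotent H›
  exact ⟨k, by simpa [hk] using pow_two_pow_mem_lowerCentralSeries h k⟩

theorem commute_mk_commutator {N : Subgroup H} [N.Normal] {y z : H} (hy : y ∈ N) (hz : z ∈ N) :
    Commute (QuotientGroup.mk' ⁅N, N⁆ y) (QuotientGroup.mk' ⁅N, N⁆ z) := by
  rw [← commutatorElement_eq_one_iff_commute, ← map_commutatorElement, QuotientGroup.mk'_apply,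
    QuotientGroup.eq_one_iff]
  exact commutator_mem_commutator hy hz

theorem pow_mem_commutator_of_mem_normalClosure {α : H} {e : ℕ}
    (hα : α ^ e ∈ ⁅normalClosure {α}, normalClosure {α}⁆) {x : H} (hx : x ∈ normalClosure {α}) :
    x ^ e ∈ ⁅normalClosure {α}, normalClosure {α}⁆ := by
  set N := normalClosure ({α} : Set H)
  set π := QuotientGroup.mk' ⁅N, N⁆
  have hπ (y : H) : π y = 1 ↔ y ∈ ⁅N, N⁆ := QuotientGroup.eq_one_iff y
  have hconj_mem (g : H) : g * α ^ e * g⁻¹ ∈ ⁅N, N⁆ := (commutator_normal N N).conj_mem _ hα g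
  rw [← hπ, map_pow]
  induction hx using closure_induction with
  | mem y hy =>
    obtain ⟨_, rfl, hconj⟩ := Group.mem_conjugatesOfSet_iff.mp hy
    obtain ⟨g, rfl⟩ := isConj_iff.mp hconj
    rw [← map_pow, hπ, conj_pow]
    exact hconj_mem g
  | one => rw [map_one, one_pow]
  | mul y z hy hz hye hze =>
    rw [map_mul, (commute_mk_commutator (N := N) hy hz).mul_pow, hye, hze, one_mul]
  | inv y _ hye => rw [map_inv, inv_pow, hye, inv_one]

instance isNilpotent_quotient_lowerCentralSeries (n : ℕ) :
    Group.IsNilpotent (H ⧸ (⊤ : Subgroup H).lowerCentralSeries n) := by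
  refine Subgroup.nilpotent_iff_lowerCentralSeries.mpr ⟨n, ?_⟩
  rw [← map_top_lowerCentralSeries_of_surjective (QuotientGroup.mk'_surjective _),
    Subgroup.map_eq_bot_iff, QuotientGroup.ker_mk']

theorem mem_iInf_lowerCentralSeries_of_forall_isNilpotent {H : Type u} [Group H] {x : H}
    (hx : ∀ (Q : Type u) [Group Q] [Group.IsNilpotent Q] (f : H →* Q), f x = 1) :
    x ∈ ⨅ n, (⊤ : Subgroup H).lowerCentralSeries n :=
  mem_iInf.mpr fun _ => (QuotientGroup.eq_one_iff x).mp (hx _ (QuotientGroup.mk' _))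

end LowerCentralSeries

namespace OneRelatorLCS

section

variable {P : Type*} [Group P] {u v t : P}
  (huv : Commute u v) (hu : t⁻¹ * u * t = v) (hv : t⁻¹ * v * t = u * v ^ 3)
include huv hu hv

theorem conj_zpow_mul_zpow (i j : ℤ) :
    t⁻¹ * (u ^ i * v ^ j) * t = u ^ j * v ^ (i + 3 * j) := by
  have hconj (x : P) : t⁻¹ * x * t = MulAut.conj t⁻¹ x := by simp
  rw [hconj, map_mul, map_zpow, map_zpow, ← hconj, ← hconj, hu, hv, (huv.pow_right 3).mul_zpow,
    ← zpow_natCast, ← zpow_mul, ← one_mul (v ^ i), ← zpow_zero u,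
    huv.zpow_mul_zpow_mul_zpow_mul_zpow]
  ring_nf

theorem commutatorElement_inv_zpow_mul_zpow (i j : ℤ) :
    ⁅(u ^ i * v ^ j)⁻¹, t⁻¹⁆ = u ^ (j - i) * v ^ (i + 2 * j) := by
  have hinv : (u ^ i * v ^ j)⁻¹ = u ^ (-i) * v ^ (-j) := by
    rw [mul_inv_rev, ← zpow_neg, ← zpow_neg, (huv.zpow_zpow _ _).symm.eq]
  have hassoc (x : P) : x⁻¹ * t⁻¹ * x * t = x⁻¹ * (t⁻¹ * x * t) := by group
  rw [commutatorElement_def, inv_inv, inv_inv, hassoc, conj_zpow_mul_zpow huv hu hv, hinv,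
    huv.zpow_mul_zpow_mul_zpow_mul_zpow]
  ring_nf

theorem zpow_mul_zpow_mem_lowerCentralSeries (m : ℕ) (i j : ℤ) :
    u ^ ((-3) ^ m * i) * v ^ ((-3) ^ m * j) ∈ (⊤ : Subgroup P).lowerCentralSeries m := by
  induction m generalizing i j with
  | zero => exact mem_top _
  | succ m ih =>
    -- `(i, j) ↦ (j - i, i + 2j)` maps `(2i - j, -i - j)` to `-3 • (i, j)`
    have h := commutatorElement_inv_zpow_mul_zpow huv hu hv ((-3) ^ m * (2 * i - j))
      ((-3) ^ m * (-i - j))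
    rw [show (-3) ^ m * (-i - j) - (-3) ^ m * (2 * i - j) = (-3) ^ (m + 1) * i by ring,
      show (-3) ^ m * (2 * i - j) + 2 * ((-3) ^ m * (-i - j)) = (-3) ^ (m + 1) * j by ring] at h
    rw [← h]
    exact commutator_mem_commutator (inv_mem (ih _ _)) (mem_top _)

theorem exists_pow_three_pow_eq_one [Group.IsNilpotent P] : ∃ m, u ^ 3 ^ m = 1 := by
  obtain ⟨m, hm⟩ := Subgroup.nilpotent_iff_lowerCentralSeries.mp ‹Group.IsNilpotent P›
  refine ⟨m, ?_⟩
  have h := zpow_mul_zpow_mem_lowerCentralSeries huv hu hv m 1 0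
  rw [hm, mem_bot, mul_one, mul_zero, zpow_zero, mul_one, ← pow_natAbs_eq_one, Int.natAbs_pow] at h
  exact h

end

theorem map_cmt {H K : Type*} [Group H] [Group K] (f : H →* K) (x y : H) :
    f (cmt x y) = cmt (f x) (f y) := by
  simp only [cmt, map_mul, map_inv]

variable {Q : Type*} [Group Q] {α α₁ β : Q}

theorem conj_cmt_eq_inv (h₀ : β⁻¹ * α * β = α₁) (h₁ : β⁻¹ * α₁ * β = α * α₁ ^ 3) :
    (β * (α₁ ^ 3)⁻¹)⁻¹ * cmt α α₁ * (β * (α₁ ^ 3)⁻¹) = (cmt α α₁)⁻¹ := by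
  have hβ : β⁻¹ * cmt α α₁ * β = cmt (β⁻¹ * α * β) (β⁻¹ * α₁ * β) := by simp only [cmt]; group
  rw [h₀, h₁] at hβ
  calc _ = α₁ ^ 3 * (β⁻¹ * cmt α α₁ * β) * (α₁ ^ 3)⁻¹ := by group
    _ = (cmt α α₁)⁻¹ := by rw [hβ]; simp only [cmt]; group

theorem exists_cmt_pow_three_pow_eq_one [Group.IsNilpotent Q] (h₀ : β⁻¹ * α * β = α₁)
    (h₁ : β⁻¹ * α₁ * β = α * α₁ ^ 3) : ∃ l, cmt α α₁ ^ 3 ^ l = 1 := by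
  set N := normalClosure ({α} : Set Q)
  have hαN : α ∈ N := subset_normalClosure rfl
  have hα₁N : α₁ ∈ N := h₀ ▸ by simpa using normalClosure_normal.conj_mem α hαN β⁻¹
  obtain ⟨m, hm⟩ : ∃ m, α ^ 3 ^ m ∈ ⁅N, N⁆ := by
    let π := QuotientGroup.mk' ⁅N, N⁆
    have huv : Commute (π α) (π α₁) := commute_mk_commutator hαN hα₁N
    obtain ⟨m, hm⟩ := exists_pow_three_pow_eq_one (t := π β) huv
      (by rw [← h₀, map_mul, map_mul, map_inv])
      (by rw [← map_pow, ← map_mul, ← h₁, map_mul, map_mul, map_inv])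
    exact ⟨m, (QuotientGroup.eq_one_iff _).mp (by rwa [← map_pow] at hm)⟩
  obtain ⟨n, hn⟩ := N.exists_pow_pow_eq_one_of_pow_mem_commutator fun _ hx =>
    pow_mem_commutator_of_mem_normalClosure hm hx
  refine ⟨m * n, ?_⟩
  rw [pow_mul]
  exact hn _ (mul_mem (mul_mem (mul_mem (inv_mem hαN) (inv_mem hα₁N)) hαN) hα₁N)

theorem cmt_eq_one_of_isNilpotent [Group.IsNilpotent Q] (h₀ : β⁻¹ * α * β = α₁)
    (h₁ : β⁻¹ * α₁ * β = α * α₁ ^ 3) : cmt α α₁ = 1 := by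
  obtain ⟨k, hk⟩ := exists_pow_two_pow_eq_one_of_conj_eq_inv (conj_cmt_eq_inv h₀ h₁)
  obtain ⟨l, hl⟩ := exists_cmt_pow_three_pow_eq_one h₀ h₁
  exact (pow_eq_one_iff_of_coprime (Nat.Coprime.pow k l (by norm_num))).mp ⟨hk, hl⟩

theorem conj_conj_a : b⁻¹ * (b⁻¹ * a * b) * b = a * (b⁻¹ * a * b) ^ 3 := by
  have hrel : (b⁻¹ * b⁻¹ * a * b * b)⁻¹ * a * (b⁻¹ * a ^ 3 * b) = 1 :=
    (QuotientGroup.eq_one_iff rel).mpr (Subgroup.subset_normalClosure rfl)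
  have hpow : (b⁻¹ * a * b) ^ 3 = b⁻¹ * a ^ 3 * b := by
    simpa using conj_pow (a := b⁻¹) (b := a) (i := 3)
  rw [hpow, ← inv_mul_eq_one, ← hrel]
  group

theorem cmt_a_conj_a_ne_one : cmt a (b⁻¹ * a * b) ≠ 1 := by
  let σ : Fin 2 → Equiv.Perm (Fin 4) := ![Equiv.swap 0 1 * Equiv.swap 1 2, Equiv.swap 2 3]
  have hσ : ∀ r ∈ ({rel} : Set (FreeGroup (Fin 2))), FreeGroup.lift σ r = 1 := by
    rintro _ rfl
    decide
  intro h
  have hσc := congrArg (PresentedGroup.toGroup hσ) h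
  simp only [cmt, map_mul, map_inv, map_one, a, b, PresentedGroup.toGroup.of] at hσc
  exact absurd hσc (by decide)

/-- In `G = ⟨a, b | a^{b²} = a·a^{3b}⟩`, the element `[a, a^b]` is a nontrivial
element of `⋂_n γ_n(G)`; in particular `G` is not residually nilpotent. -/
theorem not_residually_nilpotent :
    cmt a (b⁻¹ * a * b) ≠ 1 ∧
      cmt a (b⁻¹ * a * b) ∈ ⨅ n : ℕ, (⊤ : Subgroup G).lowerCentralSeries n ∧
      (⨅ n : ℕ, (⊤ : Subgroup G).lowerCentralSeries n) ≠ ⊥ := by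
  have hmem : cmt a (b⁻¹ * a * b) ∈ ⨅ n : ℕ, (⊤ : Subgroup G).lowerCentralSeries n :=
    mem_iInf_lowerCentralSeries_of_forall_isNilpotent fun _ _ _ f => by
      rw [map_cmt]
      refine cmt_eq_one_of_isNilpotent (β := f b) (by simp only [map_mul, map_inv]) ?_
      rw [← map_inv, ← map_mul, ← map_mul, ← map_pow, ← map_mul, conj_conj_a]
  refine ⟨cmt_a_conj_a_ne_one, hmem, fun hbot => cmt_a_conj_a_ne_one ?_⟩
  rwa [hbot, mem_bot] at hmem

end OneRelatorLCS
end

section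
/- Let H = ℤ² ⋊ ℤ be the semidirect product in which the generator of ℤ acts on ℤ² by the matrix U = !![0,1;1,3]. Then H is residually nilpotent: ⋂_{n∈ℕ} γ_n(H) = 1. -/
/-!
Write `U = 1 + M`. Since `ℤ²` is abelian, the commutator of `a ∈ ℤ²` with an element acting by
`U^m` is `(1 - U^m) a`, and `1 - U^m ∈ M ℤ[U, U⁻¹]`; hence `γ_{n+1}(H) ⊆ M^n ℤ² ⋊ 1`.
The binary form `Q (a, b) = a² + 3ab - b²` satisfies `Q (M v) = -3 Q v`, so `3^n ∣ Q v` for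
every `v ∈ M^n ℤ²`. On `⋂ₙ M^n ℤ²` the form `Q` therefore vanishes, and
`Q` is anisotropic over `ℚ` because its discriminant `13` is not a square.
-/

namespace ZZrtimesZ

/-- The matrix `U = !![0,1;1,3] ∈ GL₂(ℤ)`. -/
def U : Matrix (Fin 2) (Fin 2) ℤ := !![0, 1; 1, 3]

/-- The automorphism of `ℤ²` given by the matrix `U` (its inverse is given by
`U⁻¹ = !![-3,1;1,0]`, since `det U = -1`). -/
def Uaut : (Fin 2 → ℤ) ≃+ (Fin 2 → ℤ) where
  toFun v := U.mulVec v
  invFun v := (!![-3, 1; 1, 0] : Matrix (Fin 2) (Fin 2) ℤ).mulVec v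
  left_inv v := by
    show (!![-3, 1; 1, 0] : Matrix (Fin 2) (Fin 2) ℤ).mulVec (U.mulVec v) = v
    rw [Matrix.mulVec_mulVec,
      show (!![-3, 1; 1, 0] : Matrix (Fin 2) (Fin 2) ℤ) * U = 1 by decide,
      Matrix.one_mulVec]
  right_inv v := by
    show U.mulVec ((!![-3, 1; 1, 0] : Matrix (Fin 2) (Fin 2) ℤ).mulVec v) = v
    rw [Matrix.mulVec_mulVec,
      show U * (!![-3, 1; 1, 0] : Matrix (Fin 2) (Fin 2) ℤ) = 1 by decide,
      Matrix.one_mulVec]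
  map_add' v w := Matrix.mulVec_add U v w

/-- The action of `ℤ` on `ℤ²` in which `1 ∈ ℤ` acts by the matrix `U`. -/
def phi : Multiplicative ℤ →* MulAut (Multiplicative (Fin 2 → ℤ)) :=
  zpowersHom _ (AddEquiv.toMultiplicative Uaut)

/-- The semidirect product `H = ℤ² ⋊ ℤ` where the generator of `ℤ` acts by `U`. -/
abbrev H : Type := SemidirectProduct (Multiplicative (Fin 2 → ℤ)) (Multiplicative ℤ) phi

end ZZrtimesZ

open scoped Pointwise commutatorElement Matrix

namespace SemidirectProduct

variable {N G : Type*} [CommGroup N]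

theorem commutatorElement_inl [Group G] {φ : G →* MulAut N} (a : N) (x : N ⋊[φ] G) :
    ⁅(inl a : N ⋊[φ] G), x⁆ = inl (a * (φ x.right a)⁻¹) := by
  ext
  · simp only [commutatorElement_def, mul_left, left_inl, right_inl, map_one, MulAut.one_apply,
      mul_right, one_mul, inv_left, inv_one, map_inv, inv_right, mul_one, MulAut.inv_apply,
      MulEquiv.apply_symm_apply, map_mul]
    rw [mul_right_comm a, mul_inv_cancel_right]
  · simp [commutatorElement_def]

variable [CommGroup G] {φ : G →* MulAut N}

theorem lowerCentralSeries_succ_le_map_inl (K : ℕ → Subgroup N) (hK₀ : K 0 = ⊤)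
    (hK : ∀ n, ∀ a ∈ K n, ∀ g, a * (φ g a)⁻¹ ∈ K (n + 1)) (n : ℕ) :
    (⊤ : Subgroup (N ⋊[φ] G)).lowerCentralSeries (n + 1) ≤ (K n).map inl := by
  induction n with
  | zero =>
    rw [Subgroup.top_lowerCentralSeries_one, hK₀, ← MonoidHom.range_eq_map,
      range_inl_eq_ker_rightHom]
    exact Abelianization.commutator_subset_ker _
  | succ n ih =>
    rw [Subgroup.lowerCentralSeries_succ, Subgroup.commutator_le]
    intro x hx y _
    obtain ⟨a, ha, rfl⟩ := ih hx
    rw [commutatorElement_inl]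
    exact Subgroup.mem_map_of_mem _ (hK n a ha _)

theorem iInf_lowerCentralSeries_eq_bot (K : ℕ → Subgroup N) (hK₀ : K 0 = ⊤)
    (hK : ∀ n, ∀ a ∈ K n, ∀ g, a * (φ g a)⁻¹ ∈ K (n + 1)) (hK_bot : ⨅ n, K n = ⊥) :
    ⨅ n, (⊤ : Subgroup (N ⋊[φ] G)).lowerCentralSeries n = ⊥ := by
  refine le_bot_iff.1 ?_
  calc ⨅ n, (⊤ : Subgroup (N ⋊[φ] G)).lowerCentralSeries n
      ≤ ⨅ n, (K n).map inl :=
        le_iInf fun n => (iInf_le _ (n + 1)).trans (lowerCentralSeries_succ_le_map_inl K hK₀ hK n)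
    _ = (⨅ n, K n).map inl := (Subgroup.map_iInf _ inl_injective _).symm
    _ = ⊥ := by rw [hK_bot, Subgroup.map_bot]

end SemidirectProduct

theorem MulAut.mul_inv_zpow_apply_mem {N : Type*} [CommGroup N] {K K' : Subgroup N}
    {f : MulAut N} (hf : ∀ a, f a ∈ K' ↔ a ∈ K') (h : ∀ a ∈ K, a * (f a)⁻¹ ∈ K') (m : ℤ) :
    ∀ a ∈ K, a * ((f ^ m) a)⁻¹ ∈ K' := by
  have hstab : f ∈ MulAction.stabilizer (MulAut N) K' := by
    ext a
    rw [Subgroup.mem_pointwise_smul_iff_inv_smul_mem, ← hf, MulAut.smul_def, MulAut.apply_inv_self]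
  have hzpow (m : ℤ) (b : N) (hb : b ∈ K') : (f ^ m) b ∈ K' := by
    rw [← MulAction.mem_stabilizer_iff.1 (zpow_mem hstab m)]
    exact Subgroup.smul_mem_pointwise_smul b _ _ hb
  induction m using Int.induction_on with
  | zero => simp
  | succ m ih =>
    intro a ha
    convert mul_mem (ih a ha) (hzpow m _ (h a ha)) using 1
    rw [zpow_add_one, mul_apply, map_mul, map_inv]
    group
  | pred m ih =>
    intro a ha
    convert mul_mem (ih a ha) (inv_mem (hzpow (-m - 1) _ (h a ha))) using 1
    rw [map_mul, map_inv, ← mul_apply, ← zpow_add_one, sub_add_cancel]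
    group

theorem Equiv.apply_mem_range_iff {α : Type*} (e : α ≃ α) {T : α → α}
    (h : ∀ x, e (T x) = T (e x)) (x : α) : e x ∈ Set.range T ↔ x ∈ Set.range T := by
  constructor
  · rintro ⟨y, hy⟩
    exact ⟨e.symm y, e.injective (by rw [h, e.apply_symm_apply, hy])⟩
  · rintro ⟨y, rfl⟩
    exact ⟨e y, (h y).symm⟩

theorem Matrix.eq_zero_of_forall_mem_range_pow_mulVec {ι : Type*} [Fintype ι] [DecidableEq ι]
    {M : Matrix ι ι ℤ} {Q : (ι → ℤ) → ℤ} {c : ℤ} (hc : c.natAbs ≠ 1)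
    (hQM : ∀ w, Q (M *ᵥ w) = c * Q w) (hQ : ∀ v, Q v = 0 → v = 0) {v : ι → ℤ}
    (hv : ∀ n, v ∈ Set.range (M ^ n *ᵥ ·)) : v = 0 := by
  have hQMn (n : ℕ) (w : ι → ℤ) : Q (M ^ n *ᵥ w) = c ^ n * Q w := by
    induction n with
    | zero => rw [pow_zero, one_mulVec, pow_zero, one_mul]
    | succ n ih => rw [pow_succ', ← mulVec_mulVec, hQM, ih, pow_succ', mul_assoc]
  refine hQ v (by_contra fun hv0 => ?_)
  obtain ⟨n, hn⟩ := Int.finiteMultiplicity_iff.2 ⟨hc, hv0⟩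
  obtain ⟨w, rfl⟩ := hv (n + 1)
  exact hn ⟨Q w, hQMn (n + 1) w⟩

namespace ZZrtimesZ

open Matrix

def M : Matrix (Fin 2) (Fin 2) ℤ := U - 1

theorem M_eq : M = !![-1, 1; 1, 2] := by
  decide

theorem Uaut_apply (v : Fin 2 → ℤ) : Uaut v = U *ᵥ v := rfl

theorem Uaut_sub_self (v : Fin 2 → ℤ) : Uaut v - v = M *ᵥ v := by
  rw [Uaut_apply, M, sub_mulVec, one_mulVec]

theorem Uaut_M_pow_mulVec (n : ℕ) (w : Fin 2 → ℤ) : Uaut (M ^ n *ᵥ w) = M ^ n *ᵥ Uaut w := by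
  have hUM : Commute U M := (Commute.refl U).sub_right (Commute.one_right U)
  rw [Uaut_apply, Uaut_apply, mulVec_mulVec, mulVec_mulVec, (hUM.pow_right n).eq]

def rangeMPow (n : ℕ) : Subgroup (Multiplicative (Fin 2 → ℤ)) :=
  AddSubgroup.toSubgroup (LinearMap.range (M ^ n).mulVecLin).toAddSubgroup

theorem mem_rangeMPow {n : ℕ} {a : Multiplicative (Fin 2 → ℤ)} :
    a ∈ rangeMPow n ↔ a.toAdd ∈ Set.range (M ^ n *ᵥ ·) :=
  Iff.rfl

theorem rangeMPow_zero : rangeMPow 0 = ⊤ :=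
  eq_top_iff.2 fun a _ => mem_rangeMPow.2 ⟨a.toAdd, by simp⟩

theorem mul_inv_phi_mem_rangeMPow_succ (n : ℕ) (a : Multiplicative (Fin 2 → ℤ))
    (ha : a ∈ rangeMPow n) (g : Multiplicative ℤ) : a * (phi g a)⁻¹ ∈ rangeMPow (n + 1) := by
  refine MulAut.mul_inv_zpow_apply_mem (f := AddEquiv.toMultiplicative Uaut)
    (fun b => ?invariant) (fun b hb => ?step) g.toAdd a ha
  case invariant => exact Uaut.toEquiv.apply_mem_range_iff (Uaut_M_pow_mulVec (n + 1)) b.toAdd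
  case step =>
    obtain ⟨w, hw⟩ := mem_rangeMPow.1 hb
    refine mem_rangeMPow.2 ⟨-w, ?_⟩
    change M ^ (n + 1) *ᵥ -w = b.toAdd - Uaut b.toAdd
    rw [← hw, ← neg_sub, Uaut_sub_self, pow_succ', ← mulVec_mulVec, mulVec_neg, mulVec_neg]

/-- `Q v = det [v | M v]`, whence `Q (M v) = det M * Q v`. -/
def Q (v : Fin 2 → ℤ) : ℤ := v 0 ^ 2 + 3 * v 0 * v 1 - v 1 ^ 2

theorem Q_M_mulVec (w : Fin 2 → ℤ) : Q (M *ᵥ w) = -3 * Q w := by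
  simp only [Q, M_eq, mulVec, dotProduct, Fin.sum_univ_two, of_apply, cons_val', cons_val_zero,
    cons_val_one, cons_val_fin_one]
  ring

theorem Q_eq_zero_iff {v : Fin 2 → ℤ} : Q v = 0 ↔ v = 0 := by
  refine ⟨fun hQ => ?_, fun hv => by simp [Q, hv]⟩
  unfold Q at hQ
  have h13 : (2 * v 0 + 3 * v 1) ^ 2 = 13 * v 1 ^ 2 := by linear_combination 4 * hQ
  have hv1 : v 1 = 0 := by
    by_contra hv1
    have : IsSquare (13 : ℚ) :=
      ⟨(2 * v 0 + 3 * v 1) / v 1, by field_simp; exact_mod_cast h13.symm⟩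
    norm_num at this
  have hv0 : v 0 = 0 := by simpa [hv1] using hQ
  ext i
  fin_cases i <;> assumption

theorem iInf_rangeMPow : ⨅ n, rangeMPow n = ⊥ :=
  eq_bot_iff.2 fun a ha =>
    eq_zero_of_forall_mem_range_pow_mulVec (by decide) Q_M_mulVec (fun _ => Q_eq_zero_iff.1)
      fun n => mem_rangeMPow.1 (Subgroup.mem_iInf.1 ha n)

/-- `H = ℤ² ⋊_U ℤ` is residually nilpotent: `⋂_n γ_n(H) = 1`. -/
theorem H_residually_nilpotent : (⨅ n : ℕ, (⊤ : Subgroup H).lowerCentralSeries n) = ⊥ :=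
  SemidirectProduct.iInf_lowerCentralSeries_eq_bot rangeMPow rangeMPow_zero
    mul_inv_phi_mem_rangeMPow_succ iInf_rangeMPow

end ZZrtimesZ
end

section
/- Let α₁ = (3+√13)/2 and α₂ = (3−√13)/2. Then no nonempty finite product of real numbers, each of the form ε·α₁^l + δ or ε·α₂^s + δ with ε, δ ∈ {1, −1} and integers l, s ≥ 1, is equal to 1 or −1. -/
/-!
Let `ω` be the generator of `ℤ[ω]`, `ω² = 3ω + 1`, and embed `ℤ[ω]` into `ℝ` by `ω ↦ α₁`; the
embedding is injective since `√13` is irrational, and it sends the conjugate `3 - ω` to `α₂`.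
Every factor is thus the image of some `w = e ω^l + d` or of its conjugate, so a product equal
to `±1` would make every such `w` a unit of `ℤ[ω]`, i.e. of norm `±1`. But applying the
embedding to the norm `w · w̄` and using `|e x^l + d| ≥ ||x| - 1|` at `x = α₁, α₂` gives
`|N(w)| ≥ (α₁ - 1)(1 + α₂) = √13 - 2 > 1`.
-/

open QuadraticAlgebra

theorem abs_sub_one_le_abs_pow_sub_one {y : ℝ} (hy : 0 ≤ y) {l : ℕ} (hl : l ≠ 0) :
    |y - 1| ≤ |y ^ l - 1| := by
  rcases le_total y 1 with h | h
  · rw [abs_of_nonpos (by linarith), abs_of_nonpos (by linarith [pow_le_one₀ hy h (n := l)])]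
    linarith [pow_le_of_le_one hy h hl]
  · rw [abs_of_nonneg (by linarith), abs_of_nonneg (by linarith [one_le_pow₀ h (n := l)])]
    linarith [le_self_pow₀ h hl]

theorem abs_abs_sub_one_le_abs_mul_pow_add {x ε δ : ℝ} (hε : |ε| = 1) (hδ : |δ| = 1) {l : ℕ}
    (hl : l ≠ 0) : |(|x| - 1)| ≤ |ε * x ^ l + δ| :=
  calc |(|x| - 1)| ≤ |(|x| ^ l - 1)| := abs_sub_one_le_abs_pow_sub_one (abs_nonneg x) hl
    _ = |(|ε * x ^ l| - |-δ|)| := by rw [abs_mul, abs_neg, hε, hδ, one_mul, abs_pow]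
    _ ≤ |ε * x ^ l + δ| := by simpa using abs_abs_sub_abs_le (ε * x ^ l) (-δ)

theorem List.prod_ne_of_forall_mem_eq_map_not_isUnit {M N F : Type*} [CommMonoid M] [Monoid N]
    [FunLike F M N] [MonoidHomClass F M N] {f : F} (hf : Function.Injective f) {L : List N}
    (hne : L ≠ []) (hL : ∀ z ∈ L, ∃ w, ¬IsUnit w ∧ f w = z) {u : M} (hu : IsUnit u) :
    L.prod ≠ f u := by
  choose! g hg_not_isUnit hg using hL
  have hmap : (L.map g).map f = L := by
    rw [List.map_map]
    exact (List.map_congr_left hg).trans L.map_id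
  rw [← hmap, ← map_list_prod, hf.ne_iff]
  rintro rfl
  obtain ⟨z, hz⟩ := L.exists_mem_of_ne_nil hne
  exact hg_not_isUnit z hz (List.prod_isUnit_iff.mp hu _ (List.mem_map_of_mem hz))

namespace QuadraticAlgebra

variable {a b : ℤ}

theorem lift_injective_of_irrational (u : {u : ℝ // u * u = a • 1 + b • u}) (hu : Irrational u) :
    Function.Injective (lift u) := by
  refine (injective_iff_map_eq_zero (lift u)).mpr fun z hz => ?_
  simp only [lift_apply_apply, zsmul_eq_mul, mul_one] at hz
  have him : z.im = 0 := by
    by_contra h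
    exact ((hu.intCast_mul h).intCast_add z.re).ne_zero hz
  ext
  · simpa [him] using hz
  · exact him

theorem intCast_norm_eq_mul_star {A F : Type*} [CommRing A] [FunLike F (QuadraticAlgebra ℤ a b) A]
    [RingHomClass F (QuadraticAlgebra ℤ a b) A] (φ : F) (z : QuadraticAlgebra ℤ a b) :
    (z.norm : A) = φ z * φ (star z) := by
  simpa using congrArg φ (algebraMap_norm_eq_mul_star z)

theorem not_isUnit_of_one_lt_abs_mul_star {F : Type*} [FunLike F (QuadraticAlgebra ℤ a b) ℝ]
    [RingHomClass F (QuadraticAlgebra ℤ a b) ℝ] (φ : F) {z : QuadraticAlgebra ℤ a b}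
    (h : 1 < |φ z * φ (star z)|) : ¬IsUnit z := by
  intro hz
  rw [isUnit_iff_norm_isUnit, Int.isUnit_iff_abs_eq] at hz
  rw [← intCast_norm_eq_mul_star, ← Int.cast_abs, hz, Int.cast_one] at h
  exact lt_irrefl 1 h

end QuadraticAlgebra

noncomputable def realEmbedding : QuadraticAlgebra ℤ 1 3 →ₐ[ℤ] ℝ :=
  lift ⟨(3 + √13) / 2, by
    have := Real.sq_sqrt (show (0 : ℝ) ≤ 13 by norm_num)
    simp only [one_smul, zsmul_eq_mul, Int.cast_ofNat]
    linear_combination this / 4⟩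

@[simp]
theorem realEmbedding_omega : realEmbedding ω = (3 + √13) / 2 := by
  simp [realEmbedding]

@[simp]
theorem realEmbedding_star_omega : realEmbedding (star ω) = (3 - √13) / 2 := by
  rw [star_eq, trace_omega, map_sub, AlgHom.commutes, realEmbedding_omega, algebraMap_int_eq,
    eq_intCast, Int.cast_ofNat]
  ring

theorem realEmbedding_injective : Function.Injective realEmbedding :=
  lift_injective_of_irrational _ <| by
    have h := ((show Irrational √13 by norm_num).intCast_add 3).div_natCast two_ne_zero
    simpa using h

theorem not_isUnit_intCast_mul_omega_pow_add {e d : ℤ} (he : |e| = 1) (hd : |d| = 1) {l : ℕ}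
    (hl : l ≠ 0) :
    ¬IsUnit ((e : QuadraticAlgebra ℤ 1 3) * ω ^ l + (d : QuadraticAlgebra ℤ 1 3)) := by
  apply not_isUnit_of_one_lt_abs_mul_star realEmbedding
  have hε : |(e : ℝ)| = 1 := by exact_mod_cast he
  have hδ : |(d : ℝ)| = 1 := by exact_mod_cast hd
  have hsq : √13 ^ 2 = 13 := Real.sq_sqrt (by norm_num)
  have hlt : 3 < √13 := by nlinarith [Real.sqrt_nonneg 13]
  have hgt : √13 < 4 := by nlinarith [Real.sqrt_nonneg 13]
  have h₁ : |(|(3 + √13) / 2| - 1)| = (√13 + 1) / 2 := by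
    rw [abs_of_pos (a := (3 + √13) / 2) (by linarith), abs_of_pos (by linarith)]
    ring
  have h₂ : |(|(3 - √13) / 2| - 1)| = (5 - √13) / 2 := by
    rw [abs_of_neg (a := (3 - √13) / 2) (by linarith), abs_of_neg (by linarith)]
    ring
  simp only [map_add, map_mul, map_pow, map_intCast, star_add, star_mul', star_pow, star_intCast,
    realEmbedding_omega, realEmbedding_star_omega, abs_mul]
  calc 1 < (√13 + 1) / 2 * ((5 - √13) / 2) := by nlinarith
    _ ≤ _ := by
      rw [← h₁, ← h₂]
      exact mul_le_mul (abs_abs_sub_one_le_abs_mul_pow_add hε hδ hl)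
        (abs_abs_sub_one_le_abs_mul_pow_add hε hδ hl) (abs_nonneg _) (abs_nonneg _)

/-- Let `α₁ = (3+√13)/2` and `α₂ = (3−√13)/2`.  No nonempty finite product of
real numbers, each of the form `ε·α₁^l + δ` or `ε·α₂^s + δ` with
`ε, δ ∈ {1, −1}` and integers `l, s ≥ 1`, equals `1` or `−1`. -/
theorem no_unit_product_of_eigenvalue_factors
    (α₁ α₂ : ℝ) (h₁ : α₁ = (3 + Real.sqrt 13) / 2) (h₂ : α₂ = (3 - Real.sqrt 13) / 2)
    (L : List ℝ) (hne : L ≠ [])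
    (hmem : ∀ z ∈ L, ∃ ε δ : ℝ, (ε = 1 ∨ ε = -1) ∧ (δ = 1 ∨ δ = -1) ∧
      ∃ l : ℕ, 1 ≤ l ∧ (z = ε * α₁ ^ l + δ ∨ z = ε * α₂ ^ l + δ)) :
    L.prod ≠ 1 ∧ L.prod ≠ -1 := by
  subst h₁ h₂
  have int_sign : ∀ ε : ℝ, ε = 1 ∨ ε = -1 → ∃ e : ℤ, (e : ℝ) = ε ∧ |e| = 1 := by
    rintro ε (rfl | rfl)
    exacts [⟨1, by norm_num⟩, ⟨-1, by norm_num⟩]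
  have hfactor : ∀ z ∈ L, ∃ w, ¬IsUnit w ∧ realEmbedding w = z := by
    intro z hz
    obtain ⟨ε, δ, hε, hδ, l, hl, hz⟩ := hmem z hz
    obtain ⟨e, rfl, he⟩ := int_sign ε hε
    obtain ⟨d, rfl, hd⟩ := int_sign δ hδ
    have hw := not_isUnit_intCast_mul_omega_pow_add he hd (l := l) (by omega)
    rcases hz with rfl | rfl
    · exact ⟨_, hw, by simp⟩
    · exact ⟨star _, isUnit_star.not.mpr hw, by simp⟩
  have hne_map : ∀ u, IsUnit u → L.prod ≠ realEmbedding u := fun _ hu =>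
    List.prod_ne_of_forall_mem_eq_map_not_isUnit realEmbedding_injective hne hfactor hu
  exact ⟨by simpa using hne_map _ isUnit_one, by simpa using hne_map _ isUnit_one.neg⟩
end

section
/- Let α₁ = (3+√13)/2 and α₂ = (3−√13)/2. For every integer l ≥ 1, the real number (α₁^l − 1)(α₂^l − 1) is an integer divisible by 3, and its absolute value is greater than 1. -/
/-!
Since `α₁ + α₂ = 3` and `α₁ α₂ = -1`, the power sums `α₁ⁿ + α₂ⁿ` form the integer Lucas sequence
`Vₙ(3, -1)`, and `(α₁ˡ - 1)(α₂ˡ - 1) = (-1)ˡ + 1 - Vₗ`. Modulo `3` the recurrence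
`Vₙ₊₂ = 3 Vₙ₊₁ + Vₙ` reduces to `Vₙ₊₂ ≡ Vₙ`, which gives `Vₗ ≡ (-1)ˡ + 1`; and `Vₗ ≥ 3ˡ` makes the
product large in absolute value.
-/

/-- The Lucas sequence `Vₙ(P, Q)`: the power sums `aⁿ + bⁿ` of the roots of `X² - P X + Q`. -/
def lucasV (P Q : ℤ) : ℕ → ℤ
  | 0 => 2
  | 1 => P
  | n + 2 => P * lucasV P Q (n + 1) - Q * lucasV P Q n

theorem pow_add_pow_eq_lucasV {R : Type*} [CommRing R] {a b : R} {P Q : ℤ}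
    (hP : a + b = P) (hQ : a * b = Q) : ∀ n : ℕ, a ^ n + b ^ n = lucasV P Q n
  | 0 => by norm_num [lucasV]
  | 1 => by simp [lucasV, hP]
  | n + 2 => by
    rw [lucasV, Int.cast_sub, Int.cast_mul, Int.cast_mul, ← pow_add_pow_eq_lucasV hP hQ n,
      ← pow_add_pow_eq_lucasV hP hQ (n + 1), ← hP, ← hQ]
    ring

theorem dvd_lucasV_neg_one_sub (P : ℤ) : ∀ n : ℕ, P ∣ lucasV P (-1) n - ((-1) ^ n + 1)
  | 0 => by norm_num [lucasV]
  | 1 => by simp [lucasV]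
  | n + 2 => by
    have h : lucasV P (-1) (n + 2) - ((-1) ^ (n + 2) + 1)
        = P * lucasV P (-1) (n + 1) + (lucasV P (-1) n - ((-1) ^ n + 1)) := by
      rw [lucasV]; ring
    rw [h]
    exact dvd_add (dvd_mul_right _ _) (dvd_lucasV_neg_one_sub P n)

theorem pow_le_lucasV_neg_one {P : ℤ} (hP : 0 ≤ P) : ∀ n : ℕ, P ^ n ≤ lucasV P (-1) n
  | 0 => by norm_num [lucasV]
  | 1 => by simp [lucasV]
  | n + 2 => by
    have ih₀ := pow_le_lucasV_neg_one hP n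
    have ih₁ := pow_le_lucasV_neg_one hP (n + 1)
    have hPn : 0 ≤ P ^ n := pow_nonneg hP n
    calc P ^ (n + 2) = P * P ^ (n + 1) := by ring
      _ ≤ P * lucasV P (-1) (n + 1) + lucasV P (-1) n := by nlinarith
      _ = lucasV P (-1) (n + 2) := by rw [lucasV]; ring

theorem one_lt_abs_neg_one_pow_add_one_sub {l : ℕ} (hl : 1 ≤ l) {v : ℤ} (hv : 3 ^ l ≤ v) :
    1 < |(-1) ^ l + 1 - v| := by
  rcases l.even_or_odd with heven | hodd
  · have h9 : (3 : ℤ) ^ 2 ≤ 3 ^ l :=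
      pow_le_pow_right₀ (by norm_num) (by obtain ⟨k, rfl⟩ := heven; omega)
    rw [heven.neg_one_pow, abs_of_neg (by linarith)]
    linarith
  · have h3 : (3 : ℤ) ^ 1 ≤ 3 ^ l := pow_le_pow_right₀ (by norm_num) hl
    rw [hodd.neg_one_pow, abs_of_neg (by linarith)]
    linarith

/-- Let `α₁ = (3+√13)/2` and `α₂ = (3−√13)/2`.  For every integer `l ≥ 1`, the
real number `(α₁^l − 1)(α₂^l − 1)` is an integer divisible by `3` whose
absolute value is greater than `1`. -/
theorem norm_of_power_sub_one
    (α₁ α₂ : ℝ) (h₁ : α₁ = (3 + Real.sqrt 13) / 2) (h₂ : α₂ = (3 - Real.sqrt 13) / 2)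
    (l : ℕ) (hl : 1 ≤ l) :
    ∃ m : ℤ, (α₁ ^ l - 1) * (α₂ ^ l - 1) = (m : ℝ) ∧ (3 : ℤ) ∣ m ∧ 1 < |m| := by
  have hsqrt : Real.sqrt 13 ^ 2 = 13 := Real.sq_sqrt (by norm_num)
  have hsum : α₁ + α₂ = ((3 : ℤ) : ℝ) := by rw [h₁, h₂]; push_cast; ring
  have hprod : α₁ * α₂ = ((-1 : ℤ) : ℝ) := by
    rw [h₁, h₂]; push_cast; linear_combination (-1 / 4 : ℝ) * hsqrt
  refine ⟨(-1) ^ l + 1 - lucasV 3 (-1) l, ?_, ?_, ?_⟩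
  · calc (α₁ ^ l - 1) * (α₂ ^ l - 1) = (α₁ * α₂) ^ l + 1 - (α₁ ^ l + α₂ ^ l) := by ring
      _ = _ := by rw [pow_add_pow_eq_lucasV hsum hprod, hprod]; push_cast; ring
  · exact dvd_sub_comm.mp (dvd_lucasV_neg_one_sub 3 l)
  · exact one_lt_abs_neg_one_pow_add_one_sub hl (pow_le_lucasV_neg_one (by norm_num) l)
end

section
/- Let U = !![0,1;1,3] and for n ≥ 1 let U^{⊗n} denote the n-fold Kronecker (tensor) power of U, an element of GL_{2^n}(ℤ). Then for every n ≥ 1, ⋂_{k∈ℕ} range((1 − U^{⊗n})^k : ℤ^{2^n} → ℤ^{2^n}) = 0; that is, the n-th tensor power of ℤ² with the diagonal ⟨t⟩-action induced by U is a residually nilpotent ℤ[⟨t⟩]-module. -/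
namespace TensorPowerU

open Matrix

/-- The matrix `U = !![0,1;1,3] ∈ GL₂(ℤ)`. -/
def U : Matrix (Fin 2) (Fin 2) ℤ := !![0, 1; 1, 3]

/-- `tpow n` is the `n`-fold Kronecker (tensor) power `U ⊗ U ⊗ ⋯ ⊗ U`,
reindexed as a `2^n × 2^n` integer matrix (`tpow 0 = 1`); it gives the
diagonal action of the generator `t` on `(ℤ²)^{⊗n} ≅ ℤ^{2^n}`. -/
def tpow : (n : ℕ) → Matrix (Fin (2 ^ n)) (Fin (2 ^ n)) ℤ
  | 0 => 1
  | n + 1 =>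
    Matrix.reindex (finProdFinEquiv.trans (finCongr (by rw [pow_succ])))
      (finProdFinEquiv.trans (finCongr (by rw [pow_succ])))
      ((tpow n).kronecker U)

/-!
Write `N = 1 - U^{⊗n}`. By Krull's intersection theorem for the finite `ℤ[X]`-module `ℤ^{2^n}`
on which `X` acts as `N`, every `x ∈ ⋂ₖ range Nᵏ` is killed by `1 - c(N) N` for some `c ∈ ℤ[X]`,
so it suffices that this integer matrix has nonzero determinant.

Over `ℝ`, `U` is diagonalised with eigenvalues `ρ, ρ' = (3 ± √13)/2`; as `ρ ρ' = -1`, the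
eigenvalues of `U^{⊗n}` are of the form `±rᵐ` with `r ∈ {ρ, ρ'}`, and the determinant vanishes
only if `c(1 - x) (1 - x) = 1` for such an eigenvalue `x`. Since `r` is irrational, any integer
polynomial identity satisfied by `r` is satisfied by `U`, so `1 ∓ Uᵐ` would be invertible over
`ℤ`. But `det (1 ∓ Uᵐ) = 1 ∓ tr Uᵐ + (-1)ᵐ` is never `±1`.
-/

open Polynomial

theorem exists_aeval_apply_eq_of_mem_iInf_range_pow {R M : Type*} [CommRing R]
    [IsNoetherianRing R] [AddCommGroup M] [Module R M] [Module.Finite R M] (f : Module.End R M)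
    {x : M} (hx : x ∈ ⨅ k : ℕ, LinearMap.range (f ^ k)) : ∃ c : R[X], aeval f c (f x) = x := by
  let I : Ideal R[X] := Ideal.span {X}
  have hmem : Module.AEval'.of f x ∈ (⨅ k : ℕ, I ^ k • ⊤ : Submodule R[X] (Module.AEval' f)) := by
    refine Submodule.mem_iInf _ |>.2 fun k => ?_
    obtain ⟨y, rfl⟩ := LinearMap.mem_range.1 (Submodule.mem_iInf _ |>.1 hx k)
    rw [Ideal.span_singleton_pow, Submodule.ideal_span_singleton_smul, ← Module.End.smul_def,
      ← Module.AEval'.X_pow_smul_of]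
    exact Submodule.smul_mem_pointwise_smul _ _ _ Submodule.mem_top
  obtain ⟨⟨r, hr⟩, hrx⟩ := (I.mem_iInf_smul_pow_eq_bot_iff _).1 hmem
  obtain ⟨c, rfl⟩ := Ideal.mem_span_singleton'.1 hr
  refine ⟨c, (Module.AEval'.of f).injective ?_⟩
  rw [← hrx, ← Module.AEval.of_aeval_smul, map_mul, aeval_X]
  rfl

theorem exists_one_sub_aeval_mul_mulVec_eq_zero {R ι : Type*} [CommRing R] [IsNoetherianRing R]
    [Fintype ι] [DecidableEq ι] {N : Matrix ι ι R} {x : ι → R}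
    (hx : x ∈ ⨅ k : ℕ, LinearMap.range (toLin' N ^ k)) :
    ∃ c : R[X], (1 - aeval N c * N) *ᵥ x = 0 := by
  obtain ⟨c, hc⟩ := exists_aeval_apply_eq_of_mem_iInf_range_pow _ hx
  have hlin : aeval (toLin' N) c = toLin' (aeval N c) :=
    aeval_algHom_apply (toLinAlgEquiv' : Matrix ι ι R ≃ₐ[R] _).toAlgHom N c
  rw [hlin, toLin'_apply, toLin'_apply, mulVec_mulVec] at hc
  exact ⟨c, by rw [sub_mulVec, one_mulVec, hc, sub_self]⟩

section KroneckerPower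

variable {α β : Type*} {k : ℕ}

def kronPow [CommSemiring α] (M : Matrix (Fin k) (Fin k) α) :
    (n : ℕ) → Matrix (Fin (k ^ n)) (Fin (k ^ n)) α
  | 0 => 1
  | n + 1 =>
    reindex (finProdFinEquiv.trans (finCongr (by rw [pow_succ])))
      (finProdFinEquiv.trans (finCongr (by rw [pow_succ])))
      ((kronPow M n).kronecker M)

theorem tpow_eq_kronPow (n : ℕ) : tpow n = kronPow U n := by
  induction n with
  | zero => rfl
  | succ n ih => rw [tpow, kronPow, ih]

theorem kronPow_mul [CommSemiring α] (M N : Matrix (Fin k) (Fin k) α) (n : ℕ) :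
    kronPow M n * kronPow N n = kronPow (M * N) n := by
  induction n with
  | zero => exact one_mul 1
  | succ n ih =>
    simp only [kronPow, kronecker, reindex_apply, submatrix_mul_equiv, ← mul_kronecker_mul, ih]

theorem kronPow_map [CommSemiring α] [CommSemiring β] (f : α →+* β)
    (M : Matrix (Fin k) (Fin k) α) (n : ℕ) : (kronPow M n).map f = kronPow (M.map f) n := by
  induction n with
  | zero => exact Matrix.map_one f f.map_zero f.map_one
  | succ n ih =>
    rw [kronPow, kronPow, reindex_apply, reindex_apply, ← submatrix_map, ← ih]
    congr 1
    ext ⟨i, i'⟩ ⟨j, j'⟩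
    simp [kronecker, kroneckerMap_apply]

theorem det_kronPow_ne_zero [CommRing α] [IsDomain α] {M : Matrix (Fin k) (Fin k) α}
    (h : M.det ≠ 0) (n : ℕ) : (kronPow M n).det ≠ 0 := by
  induction n with
  | zero => rw [kronPow, det_one]; exact one_ne_zero
  | succ n ih =>
    rw [kronPow, reindex_apply, det_submatrix_equiv_self, kronecker, det_kronecker]
    exact mul_ne_zero (pow_ne_zero _ ih) (pow_ne_zero _ h)

theorem kronPow_diagonal [CommSemiring α] (S : Submonoid α) {v : Fin k → α} (hv : ∀ j, v j ∈ S)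
    (n : ℕ) : ∃ d : Fin (k ^ n) → α, kronPow (diagonal v) n = diagonal d ∧ ∀ i, d i ∈ S := by
  induction n with
  | zero => exact ⟨1, diagonal_one.symm, fun _ => S.one_mem⟩
  | succ n ih =>
    obtain ⟨d, hd, hdS⟩ := ih
    rw [kronPow, hd, kronecker, diagonal_kronecker_diagonal, reindex_apply,
      submatrix_diagonal_equiv]
    exact ⟨_, rfl, fun i => S.mul_mem (hdS _) (hv _)⟩

end KroneckerPower

theorem _root_.SemiconjBy.aeval {R A : Type*} [CommSemiring R] [Semiring A] [Algebra R A]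
    {a x y : A} (h : SemiconjBy a x y) (q : R[X]) : SemiconjBy a (aeval x q) (aeval y q) := by
  induction q using Polynomial.induction_on' with
  | add p q hp hq => simpa only [map_add] using hp.add_right hq
  | monomial k r =>
    simpa only [aeval_monomial] using
      (Algebra.commute_algebraMap_right r a).semiconjBy.mul_right (h.pow_right k)

theorem aeval_diagonal {R α ι : Type*} [CommSemiring R] [CommSemiring α] [Algebra R α]
    [Fintype ι] [DecidableEq ι] (d : ι → α) (q : R[X]) :
    aeval (diagonal d) q = diagonal fun i => aeval (d i) q := by
  rw [← diagonalAlgHom_apply R, aeval_algHom_apply, aeval_pi_apply, diagonalAlgHom_apply]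

theorem map_aeval_int {ι R S : Type*} [Fintype ι] [DecidableEq ι] [CommRing R] [CommRing S]
    (f : R →+* S) (M : Matrix ι ι R) (q : ℤ[X]) : (aeval M q).map f = aeval (M.map f) q :=
  (aeval_algHom_apply (f.mapMatrix (m := ι)).toIntAlgHom M q).symm

theorem dvd_of_aeval_irrational_eq_zero {f H : ℤ[X]} (hf : f.Monic) (hdeg : f.natDegree = 2)
    {r : ℝ} (hr : aeval r f = 0) (hirr : Irrational r) (hH : aeval r H = 0) : f ∣ H := by
  rw [← modByMonic_eq_zero_iff_dvd hf]
  have hRdeg : (H %ₘ f).natDegree ≤ 1 := by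
    have := natDegree_modByMonic_lt H hf (by rintro rfl; simp at hdeg)
    omega
  set R := H %ₘ f
  have hRr : aeval r R = 0 := by
    have h := congrArg (aeval r) (modByMonic_add_div H f)
    rwa [map_add, map_mul, hr, zero_mul, add_zero, hH] at h
  rw [eq_X_add_C_of_natDegree_le_one hRdeg] at hRr ⊢
  simp only [map_add, map_mul, aeval_C, aeval_X, algebraMap_int_eq, Int.coe_castRingHom] at hRr
  have h1 : R.coeff 1 = 0 := by
    by_contra h
    exact ((hirr.intCast_mul h).add_intCast _).ne_zero hRr
  rw [h1, Int.cast_zero, zero_mul, zero_add, Int.cast_eq_zero] at hRr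
  rw [h1, hRr, map_zero, zero_mul, add_zero]

theorem exists_U_pow_succ_eq (m : ℕ) :
    ∃ p q : ℤ, U ^ (m + 1) = !![p, q; q, p + 3 * q] ∧ 0 ≤ p ∧ 1 ≤ q := by
  induction m with
  | zero => exact ⟨0, 1, by simp [U], le_rfl, le_rfl⟩
  | succ m ih =>
    obtain ⟨p, q, hpq, hp, hq⟩ := ih
    refine ⟨q, p + 3 * q, ?_, by omega, by omega⟩
    rw [pow_succ, hpq, U]
    ext i j
    fin_cases i <;> fin_cases j <;> simp <;> ring

theorem det_U : U.det = -1 := by simp [U, det_fin_two_of]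

theorem not_isUnit_det_one_sub_neg_one_pow_mul_U_pow (s m : ℕ) :
    ¬ IsUnit (1 - (-1) ^ s * U ^ m).det := by
  rw [Int.isUnit_iff]
  rcases neg_one_pow_eq_or (Matrix (Fin 2) (Fin 2) ℤ) s with he | he <;> rw [he]
  all_goals cases m with
  | zero => simp [det_fin_two, one_fin_two]
  | succ m =>
    obtain ⟨p, q, hpq, hp, hq⟩ := exists_U_pow_succ_eq m
    have hdet : p * (p + 3 * q) - q * q = (-1) ^ (m + 1) := by
      simpa [hpq, det_U, det_fin_two_of] using det_pow U (m + 1)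
    -- `det (1 ∓ Uᵐ⁺¹) = 1 ∓ (2p + 3q) + (-1)ᵐ⁺¹`, and `2p + 3q = 3` forces `p = 0`, `q = 1`.
    rw [hpq]
    rcases neg_one_pow_eq_or ℤ (m + 1) with hs | hs <;>
      simp [det_fin_two, one_fin_two, hs] at hdet ⊢ <;> constructor <;> intro h <;> nlinarith

theorem aeval_charpoly_U (r : ℝ) : aeval r U.charpoly = r ^ 2 - 3 * r - 1 := by
  rw [charpoly_fin_two, det_U, show U.trace = 3 by simp [U, trace_fin_two]]
  simp only [map_add, map_sub, map_mul, map_pow, aeval_X, aeval_C, algebraMap_int_eq,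
    Int.coe_castRingHom, Int.cast_ofNat, Int.cast_neg, Int.cast_one]
  ring

theorem aeval_mul_one_sub_ne_one {r : ℝ} (hr : r ^ 2 = 3 * r + 1) (hirr : Irrational r)
    (s m : ℕ) (d : ℤ[X]) : aeval ((-1) ^ s * r ^ m) d * (1 - (-1) ^ s * r ^ m) ≠ 1 := by
  intro h
  set g : ℤ[X] := (-1) ^ s * X ^ m
  have hdvd : U.charpoly ∣ d.comp g * (1 - g) - 1 :=
    dvd_of_aeval_irrational_eq_zero U.charpoly_monic (by simp [charpoly_natDegree_eq_dim])
      (by rw [aeval_charpoly_U, hr]; ring) hirr (by simp [g, aeval_comp, h])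
  have hUH : aeval U (d.comp g * (1 - g) - 1) = 0 := by
    obtain ⟨k, hk⟩ := hdvd
    rw [hk, map_mul, aeval_self_charpoly, zero_mul]
  have hunit : aeval U (d.comp g) * (1 - (-1) ^ s * U ^ m) = 1 := by
    simpa [g, aeval_comp, sub_eq_zero] using hUH
  exact not_isUnit_det_one_sub_neg_one_pow_mul_U_pow s m
    (.of_mul_eq_one_right _ (by rw [← det_mul, hunit, det_one]))

theorem exists_eq_neg_one_pow_mul_pow_of_mem_closure {R : Type*} [CommRing R] {a b : R}
    (hab : a * b = -1) {x : R} (hx : x ∈ Submonoid.closure {a, b}) :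
    ∃ r ∈ ({a, b} : Set R), ∃ s m : ℕ, x = (-1) ^ s * r ^ m := by
  obtain ⟨i, j, rfl⟩ := (Submonoid.mem_closure_pair _ _ _).1 hx
  rcases le_total i j with h | h
  · obtain ⟨m, rfl⟩ := Nat.exists_eq_add_of_le h
    exact ⟨b, by simp, i, m, by rw [pow_add, ← mul_assoc, ← mul_pow, hab]⟩
  · obtain ⟨m, rfl⟩ := Nat.exists_eq_add_of_le h
    exact ⟨a, by simp, j, m, by rw [pow_add, mul_right_comm, ← mul_pow, hab]⟩

noncomputable def ρ : ℝ := (3 + √13) / 2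

noncomputable def ρ' : ℝ := 3 - ρ

theorem ρ_sq : ρ ^ 2 = 3 * ρ + 1 := by
  have : √13 ^ 2 = 13 := Real.sq_sqrt (by norm_num)
  rw [ρ]
  linear_combination this / 4

theorem ρ'_sq : ρ' ^ 2 = 3 * ρ' + 1 := by
  rw [ρ']
  linear_combination ρ_sq

theorem ρ_mul_ρ' : ρ * ρ' = -1 := by
  rw [ρ']
  linear_combination -ρ_sq

theorem irrational_ρ : Irrational ρ := by
  have h := ((Nat.Prime.irrational_sqrt (by norm_num : Nat.Prime 13)).natCast_add 3).div_natCast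
    two_ne_zero
  simpa [ρ] using h

theorem irrational_ρ' : Irrational ρ' := by
  simpa [ρ'] using irrational_ρ.intCast_sub 3

theorem aeval_mul_one_sub_ne_one_of_mem_closure {x : ℝ}
    (hx : x ∈ Submonoid.closure {ρ, ρ'}) (d : ℤ[X]) : aeval x d * (1 - x) ≠ 1 := by
  obtain ⟨r, hr, s, m, rfl⟩ := exists_eq_neg_one_pow_mul_pow_of_mem_closure ρ_mul_ρ' hx
  rcases hr with rfl | rfl
  exacts [aeval_mul_one_sub_ne_one ρ_sq irrational_ρ s m d,
    aeval_mul_one_sub_ne_one ρ'_sq irrational_ρ' s m d]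

theorem U_map_mul_eigenvectors :
    U.map (Int.castRingHom ℝ) * !![1, 1; ρ, ρ'] = !![1, 1; ρ, ρ'] * diagonal ![ρ, ρ'] := by
  ext i j
  fin_cases i <;> fin_cases j <;> simp [U, mul_apply, Fin.sum_univ_two] <;>
    linarith [ρ_sq, ρ'_sq]

theorem det_aeval_tpow_ne_zero (n : ℕ) {q : ℤ[X]}
    (hq : ∀ x ∈ Submonoid.closure {ρ, ρ'}, aeval x q ≠ 0) : (aeval (tpow n) q).det ≠ 0 := by
  set V : Matrix (Fin 2) (Fin 2) ℝ := !![1, 1; ρ, ρ']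
  have hV : V.det ≠ 0 := by
    have : V.det = -√13 := by
      simp only [V, det_fin_two_of, ρ', ρ]
      ring
    rw [this]
    exact neg_ne_zero.2 (by positivity)
  obtain ⟨d, hd, hdS⟩ := kronPow_diagonal (Submonoid.closure {ρ, ρ'}) (v := ![ρ, ρ'])
    (fun j => by fin_cases j <;> exact Submonoid.subset_closure (by simp)) n
  have hsemi : SemiconjBy (kronPow V n) (diagonal d) (kronPow (U.map (Int.castRingHom ℝ)) n) := by
    rw [← hd, SemiconjBy, kronPow_mul, kronPow_mul, U_map_mul_eigenvectors]
  have hdet : (aeval (kronPow (U.map (Int.castRingHom ℝ)) n) q).det = ∏ i, aeval (d i) q := by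
    have h := congrArg det (hsemi.aeval q).eq
    rw [det_mul, det_mul, aeval_diagonal, det_diagonal, mul_comm] at h
    exact (mul_right_cancel₀ (det_kronPow_ne_zero hV n) h).symm
  have hcast : Int.castRingHom ℝ (aeval (tpow n) q).det ≠ 0 := by
    rw [RingHom.map_det, RingHom.mapMatrix_apply, map_aeval_int, tpow_eq_kronPow, kronPow_map,
      hdet]
    exact Finset.prod_ne_zero_iff.2 fun i _ => hq _ (hdS i)
  exact fun h => hcast (by rw [h, map_zero])

theorem tensor_power_residually_nilpotent_general (n : ℕ) :
    (⨅ k : ℕ, LinearMap.range ((Matrix.toLin' (1 - tpow n)) ^ k)) = ⊥ := by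
  refine eq_bot_iff.2 fun x hx => ?_
  obtain ⟨c, hc⟩ := exists_one_sub_aeval_mul_mulVec_eq_zero hx
  have hq : aeval (tpow n) (1 - c.comp (1 - X) * (1 - X)) =
      1 - aeval (1 - tpow n) c * (1 - tpow n) := by
    simp [aeval_comp]
  refine eq_zero_of_mulVec_eq_zero (det_aeval_tpow_ne_zero n fun y hy => ?_) (hq ▸ hc)
  simp only [map_sub, map_one, map_mul, aeval_X]
  exact sub_ne_zero.2 (aeval_mul_one_sub_ne_one_of_mem_closure hy _).symm

/-- For every `n ≥ 1`, `⋂_k range((1 − U^{⊗n})^k) = 0`: the `n`-th tensor power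
of `ℤ²` with the diagonal `⟨t⟩`-action induced by `U` is a residually
nilpotent `ℤ[⟨t⟩]`-module. -/
theorem tensor_power_residually_nilpotent (n : ℕ) (hn : 1 ≤ n) :
    (⨅ k : ℕ, LinearMap.range ((Matrix.toLin' (1 - tpow n)) ^ k)) = ⊥ :=
  tensor_power_residually_nilpotent_general n

end TensorPowerU
end
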